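/- arXiv:2201.12898 — 11 statements merged into one kernel-verified Lean document; each statement's English description precedes it below -/
import Mathlib

section
/- Let P̄ ∈ ℝ^{n×n} be a nonnegative liability matrix with zero diagonal, c ∈ ℝ^n a nonnegative vector of external in-flows, and let 𝒫(c,P̄) = {P ∈ ℝ^{n×n} : 0 ≤ P ≤ P̄, P𝟙 ≤ c + Pᵀ𝟙, P_ii = 0 for all i}. If f : [0,P̄] → ℝ is decreasing on [0,P̄] (i.e., 0 ≤ P⁽¹⁾ ≤ P⁽²⁾ ≤ P̄ with P⁽¹⁾ ≠ P⁽²⁾ implies f(P⁽²⁾) < f(P⁽¹⁾)), then every minimizer P of f over 𝒫(c,P̄) satisfies the absolute priority condition P𝟙 = min(P̄𝟙, c + Pᵀ𝟙) (componentwise minimum), i.e., P is a clearing matrix. -/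
open Matrix Finset

/-- The polytope `𝒫(c, P̄)` of feasible payment matrices:
`0 ≤ P ≤ P̄` entrywise, `P𝟙 ≤ c + Pᵀ𝟙`, and zero diagonal. -/
def FeasibleMatrix (n : ℕ) (c : Fin n → ℝ) (Pbar P : Matrix (Fin n) (Fin n) ℝ) : Prop :=
  (∀ i j, 0 ≤ P i j) ∧ (∀ i j, P i j ≤ Pbar i j) ∧
  (∀ i, P.mulVec 1 i ≤ c i + Pᵀ.mulVec 1 i) ∧ (∀ i, P i i = 0)

lemma mulVec_one_eq_sum {n : ℕ} (M : Matrix (Fin n) (Fin n) ℝ) (a : Fin n) :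
    M.mulVec 1 a = ∑ b, M a b := by
  simp [Matrix.mulVec, dotProduct]

/-- Every minimizer over `𝒫(c, P̄)` of a function `f` that is decreasing on `[0, P̄]`
satisfies the absolute-priority condition `P𝟙 = min(P̄𝟙, c + Pᵀ𝟙)`, i.e. it is a
clearing matrix. -/
theorem clearing_matrix_of_min (n : ℕ) (hn : 1 ≤ n)
    (Pbar : Matrix (Fin n) (Fin n) ℝ) (hPbar : ∀ i j, 0 ≤ Pbar i j)
    (hdiag : ∀ i, Pbar i i = 0)
    (c : Fin n → ℝ) (hc : ∀ i, 0 ≤ c i)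
    (f : Matrix (Fin n) (Fin n) ℝ → ℝ)
    (hf : ∀ P₁ P₂ : Matrix (Fin n) (Fin n) ℝ,
      (∀ i j, 0 ≤ P₁ i j) → (∀ i j, P₁ i j ≤ P₂ i j) → (∀ i j, P₂ i j ≤ Pbar i j) →
      P₁ ≠ P₂ → f P₂ < f P₁)
    (P : Matrix (Fin n) (Fin n) ℝ)
    (hP : FeasibleMatrix n c Pbar P)
    (hmin : ∀ Q, FeasibleMatrix n c Pbar Q → f P ≤ f Q) :
    ∀ i, P.mulVec 1 i = min (Pbar.mulVec 1 i) (c i + Pᵀ.mulVec 1 i) := by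
  obtain ⟨hP0, hPle, hProw, hPdiag⟩ := hP
  intro i
  have h1 : P.mulVec 1 i ≤ Pbar.mulVec 1 i := by
    rw [mulVec_one_eq_sum, mulVec_one_eq_sum]
    exact Finset.sum_le_sum fun j _ => hPle i j
  refine le_antisymm (le_min h1 (hProw i)) ?_
  by_contra hlt
  push_neg at hlt
  have hlt1 : P.mulVec 1 i < Pbar.mulVec 1 i := lt_of_lt_of_le hlt (min_le_left _ _)
  have hlt2 : P.mulVec 1 i < c i + Pᵀ.mulVec 1 i := lt_of_lt_of_le hlt (min_le_right _ _)
  -- find an entry with slack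
  have hj : ∃ j, P i j < Pbar i j := by
    by_contra h
    push_neg at h
    have : Pbar.mulVec 1 i ≤ P.mulVec 1 i := by
      rw [mulVec_one_eq_sum, mulVec_one_eq_sum]
      exact Finset.sum_le_sum fun j _ => h j
    exact absurd (lt_of_lt_of_le hlt1 this) (lt_irrefl _)
  obtain ⟨j, hjlt⟩ := hj
  have hji : j ≠ i := by
    rintro rfl
    rw [hPdiag j, hdiag j] at hjlt
    exact lt_irrefl _ hjlt
  set ε := min (Pbar i j - P i j) (c i + Pᵀ.mulVec 1 i - P.mulVec 1 i) with hε
  have hεpos : 0 < ε := lt_min (by linarith) (by linarith)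
  set Q : Matrix (Fin n) (Fin n) ℝ := P + Matrix.single i j ε with hQ
  have hQab : ∀ a b, Q a b = P a b + if a = i ∧ b = j then ε else 0 := by
    intro a b
    by_cases h : a = i ∧ b = j
    · obtain ⟨rfl, rfl⟩ := h
      simp [hQ, Matrix.single]
    · have h' : ¬(i = a ∧ j = b) := fun ⟨hi, hj⟩ => h ⟨hi.symm, hj.symm⟩
      simp only [hQ, Matrix.add_apply, Matrix.single, Matrix.of_apply,
        if_neg h', if_neg h]
  have hQrow : ∀ a, Q.mulVec 1 a = P.mulVec 1 a + if a = i then ε else 0 := by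
    intro a
    rw [mulVec_one_eq_sum, mulVec_one_eq_sum]
    simp only [hQab]
    rw [Finset.sum_add_distrib]
    congr 1
    by_cases ha : a = i
    · subst ha
      simp
    · simp [ha]
  have hQcol : ∀ a, Qᵀ.mulVec 1 a = Pᵀ.mulVec 1 a + if a = j then ε else 0 := by
    intro a
    rw [mulVec_one_eq_sum, mulVec_one_eq_sum]
    simp only [Matrix.transpose_apply, hQab]
    rw [Finset.sum_add_distrib]
    congr 1
    by_cases ha : a = j
    · subst ha
      simp
    · simp [ha]
  have hQfeas : FeasibleMatrix n c Pbar Q := by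
    refine ⟨?_, ?_, ?_, ?_⟩
    · intro a b
      rw [hQab]
      have := hP0 a b
      split_ifs <;> linarith [hεpos.le]
    · intro a b
      rw [hQab]
      split_ifs with h
      · obtain ⟨rfl, rfl⟩ := h
        have : ε ≤ Pbar a b - P a b := min_le_left _ _
        linarith
      · simpa using hPle a b
    · intro a
      rw [hQrow, hQcol]
      have hnn : (0:ℝ) ≤ if a = j then ε else 0 := by
        split_ifs
        exacts [hεpos.le, le_rfl]
      by_cases ha : a = i
      · subst ha
        have h2 : ε ≤ c a + Pᵀ.mulVec 1 a - P.mulVec 1 a := min_le_right _ _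
        rw [if_pos rfl]
        linarith
      · simp only [if_neg ha, add_zero]
        linarith [hProw a]
    · intro a
      rw [hQab]
      have h : ¬(a = i ∧ a = j) := by
        rintro ⟨rfl, rfl⟩
        exact hji rfl
      rw [if_neg h, add_zero, hPdiag]
  have hne : P ≠ Q := by
    intro h
    have := congrFun (congrFun h i) j
    rw [hQab i j, if_pos ⟨rfl, rfl⟩] at this
    linarith
  have hle : ∀ a b, P a b ≤ Q a b := by
    intro a b
    rw [hQab]
    have hnn : (0:ℝ) ≤ if a = i ∧ b = j then ε else 0 := by
      split_ifs
      exacts [hεpos.le, le_rfl]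
    linarith
  have := hf P Q hP0 hle hQfeas.2.1 hne
  linarith [hmin Q hQfeas]
end

section
/- Let A ∈ ℝ^{n×n} be a row-stochastic matrix, c ∈ ℝ^n with c ≥ 0, p̄ ∈ ℝ^n with p̄ ≥ 0, and let 𝒫_pr(c,p̄) = {p ∈ ℝ^n : 0 ≤ p ≤ p̄, p ≤ c + Aᵀp}. Then for every decreasing function f : [0,p̄] → ℝ, the minimizer of f over 𝒫_pr(c,p̄) exists and is unique; moreover this minimizer p* = p*[A,c,p̄] is the same vector for every choice of decreasing f. -/
/-!
The map `p ↦ c + Aᵀp` is monotone because `A ≥ 0`, so the supremum of any bounded family of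
its post-fixed points is again a post-fixed point. Hence the coordinatewise supremum of
`𝒫_pr(c, p̄)`, which contains `0`, lies in `𝒫_pr(c, p̄)`: it is the greatest feasible vector,
and a decreasing function attains its minimum over the feasible set exactly there.
-/

open Matrix Finset

/-- The polytope `𝒫_pr(c, p̄)` of feasible payment vectors under the pro-rata rule:
`0 ≤ p ≤ p̄` and `p ≤ c + Aᵀp`. -/
def FeasibleVec (n : ℕ) (A : Matrix (Fin n) (Fin n) ℝ) (c pbar p : Fin n → ℝ) : Prop :=
  (∀ i, 0 ≤ p i) ∧ (∀ i, p i ≤ pbar i) ∧ (∀ i, p i ≤ c i + Aᵀ.mulVec p i)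

/-- A function `f : [0, p̄] → ℝ` is decreasing: `p ≤ q` with `p ≠ q` implies `f q < f p`. -/
def DecreasingOn (n : ℕ) (pbar : Fin n → ℝ) (f : (Fin n → ℝ) → ℝ) : Prop :=
  ∀ p q : Fin n → ℝ, (∀ i, 0 ≤ p i) → (∀ i, p i ≤ q i) → (∀ i, q i ≤ pbar i) →
    p ≠ q → f q < f p

theorem Matrix.mulVec_mono_of_nonneg {m n R : Type*} [Fintype n] [Semiring R] [PartialOrder R]
    [IsOrderedRing R] {M : Matrix m n R} (hM : ∀ i j, 0 ≤ M i j) : Monotone (M *ᵥ ·) :=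
  fun _ _ huv i => dotProduct_le_dotProduct_of_nonneg_left huv (hM i)

theorem Monotone.csSup_le_apply_csSup {α : Type*} [ConditionallyCompleteLattice α] {Φ : α → α}
    (hΦ : Monotone Φ) {S : Set α} (hne : S.Nonempty) (hbdd : BddAbove S)
    (hS : ∀ x ∈ S, x ≤ Φ x) : sSup S ≤ Φ (sSup S) :=
  csSup_le hne fun x hx => (hS x hx).trans (hΦ (le_csSup hbdd hx))

section Feasible

-- The coordinatewise conditions of `FeasibleVec` are definitionally the order of `Fin n → ℝ`,
-- so they are used below directly as vector inequalities.

variable {n : ℕ} {A : Matrix (Fin n) (Fin n) ℝ} {c pbar : Fin n → ℝ}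

theorem feasibleVec_zero (hc : 0 ≤ c) (hpbar : 0 ≤ pbar) : FeasibleVec n A c pbar 0 :=
  ⟨fun _ => le_rfl, hpbar, fun i => by simpa using hc i⟩

theorem isGreatest_sSup_feasibleVec (hA : ∀ i j, 0 ≤ A i j) (hc : 0 ≤ c) (hpbar : 0 ≤ pbar) :
    IsGreatest {p | FeasibleVec n A c pbar p} (sSup {p | FeasibleVec n A c pbar p}) := by
  set S := {p | FeasibleVec n A c pbar p}
  have hzero : (0 : Fin n → ℝ) ∈ S := feasibleVec_zero hc hpbar
  have hbdd : BddAbove S := ⟨pbar, fun p hp => hp.2.1⟩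
  have hmono : Monotone fun p => c + Aᵀ *ᵥ p := fun _ _ h =>
    add_le_add_right (mulVec_mono_of_nonneg (M := Aᵀ) (fun i j => hA j i) h) c
  refine ⟨⟨?_, csSup_le ⟨0, hzero⟩ fun p hp => hp.2.1, ?_⟩, fun p hp => le_csSup hbdd hp⟩
  · exact le_csSup hbdd hzero
  · exact hmono.csSup_le_apply_csSup ⟨0, hzero⟩ hbdd fun p hp => hp.2.2

end Feasible

section Decreasing

variable {n : ℕ} {pbar : Fin n → ℝ} {f : (Fin n → ℝ) → ℝ} {p q : Fin n → ℝ}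

theorem DecreasingOn.apply_le_apply (hf : DecreasingOn n pbar f) (hp : 0 ≤ p) (hpq : p ≤ q)
    (hq : q ≤ pbar) : f q ≤ f p := by
  rcases eq_or_ne p q with rfl | hne
  · exact le_rfl
  · exact (hf p q hp hpq hq hne).le

theorem DecreasingOn.eq_of_le_of_apply_le (hf : DecreasingOn n pbar f) (hp : 0 ≤ p)
    (hpq : p ≤ q) (hq : q ≤ pbar) (hfpq : f p ≤ f q) : p = q := by
  by_contra hne
  exact (hf p q hp hpq hq hne).not_ge hfpq

end Decreasing

theorem prorata_min_exists_unique_general (n : ℕ)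
    (A : Matrix (Fin n) (Fin n) ℝ) (hA0 : ∀ i j, 0 ≤ A i j)
    (c pbar : Fin n → ℝ) (hc : ∀ i, 0 ≤ c i) (hpbar : ∀ i, 0 ≤ pbar i) :
    ∃ pstar : Fin n → ℝ, FeasibleVec n A c pbar pstar ∧
      ∀ f : (Fin n → ℝ) → ℝ, DecreasingOn n pbar f →
        (∀ q, FeasibleVec n A c pbar q → f pstar ≤ f q) ∧
        (∀ p, FeasibleVec n A c pbar p →
          (∀ q, FeasibleVec n A c pbar q → f p ≤ f q) → p = pstar) := by
  obtain ⟨hfeas, hgreatest⟩ := isGreatest_sSup_feasibleVec hA0 hc hpbar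
  refine ⟨_, hfeas, fun f hf => ⟨fun q hq => ?_, fun p hp hmin => ?_⟩⟩
  · exact hf.apply_le_apply hq.1 (hgreatest hq) hfeas.2.1
  · exact hf.eq_of_le_of_apply_le hp.1 (hgreatest hp) hfeas.2.1 (hmin _ hfeas)

/-- For a row-stochastic matrix `A` and nonnegative `c, p̄`, the minimizer over
`𝒫_pr(c, p̄)` of every decreasing function `f` exists, is unique, and is the same
vector `p*` for every choice of decreasing `f`. -/
theorem prorata_min_exists_unique (n : ℕ) (hn : 1 ≤ n)
    (A : Matrix (Fin n) (Fin n) ℝ) (hA0 : ∀ i j, 0 ≤ A i j) (hA1 : ∀ i, ∑ j, A i j = 1)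
    (c pbar : Fin n → ℝ) (hc : ∀ i, 0 ≤ c i) (hpbar : ∀ i, 0 ≤ pbar i) :
    ∃ pstar : Fin n → ℝ, FeasibleVec n A c pbar pstar ∧
      ∀ f : (Fin n → ℝ) → ℝ, DecreasingOn n pbar f →
        (∀ q, FeasibleVec n A c pbar q → f pstar ≤ f q) ∧
        (∀ p, FeasibleVec n A c pbar p →
          (∀ q, FeasibleVec n A c pbar q → f p ≤ f q) → p = pstar) :=
  prorata_min_exists_unique_general n A hA0 c pbar hc hpbar
end

section
/- Let A ∈ ℝ^{n×n} be row-stochastic, c, p̄ ∈ ℝ^n nonnegative, and let p* = p*[A,c,p̄] be the unique minimizer over 𝒫_pr(c,p̄) = {p ∈ ℝ^n : 0 ≤ p ≤ p̄, p ≤ c + Aᵀp} of some (equivalently, any) decreasing function f : [0,p̄] → ℝ. Then p* dominates every feasible payment vector: p* ≥ p for all p ∈ 𝒫_pr(c,p̄). -/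
open Matrix Finset

/-- The minimizer `p*` of a decreasing function over `𝒫_pr(c, p̄)` dominates every
feasible payment vector. -/
theorem prorata_min_dominates (n : ℕ) (hn : 1 ≤ n)
    (A : Matrix (Fin n) (Fin n) ℝ) (hA0 : ∀ i j, 0 ≤ A i j) (hA1 : ∀ i, ∑ j, A i j = 1)
    (c pbar : Fin n → ℝ) (hc : ∀ i, 0 ≤ c i) (hpbar : ∀ i, 0 ≤ pbar i)
    (f : (Fin n → ℝ) → ℝ) (hf : DecreasingOn n pbar f)
    (pstar : Fin n → ℝ) (hfeas : FeasibleVec n A c pbar pstar)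
    (hmin : ∀ q, FeasibleVec n A c pbar q → f pstar ≤ f q) :
    ∀ p, FeasibleVec n A c pbar p → ∀ i, p i ≤ pstar i := by
  intro p hp
  set q : Fin n → ℝ := fun i => max (p i) (pstar i) with hqdef
  have hmono : ∀ (u v : Fin n → ℝ), (∀ i, u i ≤ v i) →
      ∀ i, Aᵀ.mulVec u i ≤ Aᵀ.mulVec v i := by
    intro u v huv i
    simp only [Matrix.mulVec, dotProduct, Matrix.transpose_apply]
    exact Finset.sum_le_sum fun j _ =>
      mul_le_mul_of_nonneg_left (huv j) (hA0 j i)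
  have hpq : ∀ i, p i ≤ q i := fun i => le_max_left _ _
  have hsq : ∀ i, pstar i ≤ q i := fun i => le_max_right _ _
  have hq : FeasibleVec n A c pbar q := by
    refine ⟨fun i => le_trans (hp.1 i) (hpq i), fun i => max_le (hp.2.1 i) (hfeas.2.1 i),
      fun i => max_le ?_ ?_⟩
    · exact le_trans (hp.2.2 i) (by linarith [hmono p q hpq i])
    · exact le_trans (hfeas.2.2 i) (by linarith [hmono pstar q hsq i])
  have heq : pstar = q := by
    by_contra h
    exact absurd (hmin q hq) (not_le.mpr (hf pstar q hfeas.1 hsq hq.2.1 h))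
  intro i
  have := congrFun heq i
  simp only [hqdef] at this
  have := le_max_left (p i) (pstar i)
  linarith [congrFun heq i, le_max_left (p i) (pstar i)]
end

section
/- Let A ∈ ℝ^{n×n} be row-stochastic, c, p̄ ∈ ℝ^n nonnegative, and let p* = p*[A,c,p̄] be the unique minimizer over 𝒫_pr(c,p̄) = {p ∈ ℝ^n : 0 ≤ p ≤ p̄, p ≤ c + Aᵀp} of some (equivalently, any) decreasing function f : [0,p̄] → ℝ. Then every strongly connected sink component of the digraph G[A] contains at least one node i such that p*_i = p̄_i. -/
open Matrix Finset

/-- Reachability in the weighted digraph `G[A]`, which has an arc `i → j` iff `A i j > 0`. -/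
def Reach {n : ℕ} (A : Matrix (Fin n) (Fin n) ℝ) (i j : Fin n) : Prop :=
  Relation.ReflTransGen (fun a b => 0 < A a b) i j

/-- `V0` is a strongly connected component of `G[A]`: it is nonempty, all its nodes are
mutually reachable, and it is maximal with this property. -/
def IsSCC {n : ℕ} (A : Matrix (Fin n) (Fin n) ℝ) (V0 : Set (Fin n)) : Prop :=
  V0.Nonempty ∧ (∀ i ∈ V0, ∀ j ∈ V0, Reach A i j) ∧
  (∀ i ∈ V0, ∀ j, Reach A i j → Reach A j i → j ∈ V0)

/-- `V0` is a sink in `G[A]`: no arc leaves it. -/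
def IsSink {n : ℕ} (A : Matrix (Fin n) (Fin n) ℝ) (V0 : Set (Fin n)) : Prop :=
  ∀ i ∈ V0, ∀ j, 0 < A i j → j ∈ V0

/-!
If `p*` paid less than `p̄` everywhere on a sink component `V₀`, the restriction of `A` to the rows
of `V₀` would still have eigenvalue `1` (its rows on `V₀` sum to `1`), hence a left eigenvector `v`
supported on `V₀`. Its modulus `d = |v|` satisfies `d ≤ Aᵀ d`, so `p* + ε d` is still feasible for
small `ε > 0`; it dominates `p*` strictly, contradicting minimality of a decreasing `f`.
-/

open Filter Topology

namespace Matrix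

variable {ι : Type*} [Fintype ι]

theorem exists_vecMul_eq_self_of_mulVec_eq_self [DecidableEq ι] {K : Type*} [Field K]
    (M : Matrix ι ι K) {u : ι → K} (hu : u ≠ 0) (hMu : M *ᵥ u = u) :
    ∃ v, v ≠ 0 ∧ v ᵥ* M = v := by
  have hdet : (M - 1).det = 0 :=
    exists_mulVec_eq_zero_iff.1 ⟨u, hu, by rw [sub_mulVec, one_mulVec, hMu, sub_self]⟩
  obtain ⟨v, hv, hvM⟩ := exists_vecMul_eq_zero_iff.2 hdet
  exact ⟨v, hv, by rwa [vecMul_sub, vecMul_one, sub_eq_zero] at hvM⟩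

theorem abs_le_abs_vecMul_of_vecMul_eq_self {M : Matrix ι ι ℝ} (hM : ∀ i j, 0 ≤ M i j)
    {v : ι → ℝ} (hv : v ᵥ* M = v) : |v| ≤ |v| ᵥ* M := by
  intro i
  calc |v| i = |(v ᵥ* M) i| := by rw [hv, Pi.abs_apply]
    _ = |∑ j, v j * M j i| := rfl
    _ ≤ ∑ j, |v j * M j i| := abs_sum_le_sum_abs _ _
    _ = (|v| ᵥ* M) i := by simp only [abs_mul, abs_of_nonneg (hM _ _)]; rfl

theorem exists_subinvariant_supported_on_sink (A : Matrix ι ι ℝ) (hA0 : ∀ i j, 0 ≤ A i j)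
    (hA1 : ∀ i, ∑ j, A i j = 1) {S : Set ι} (hS : S.Nonempty)
    (hsink : ∀ i ∈ S, ∀ j, 0 < A i j → j ∈ S) :
    ∃ d : ι → ℝ, 0 ≤ d ∧ d ≠ 0 ∧ (∀ i ∉ S, d i = 0) ∧ d ≤ d ᵥ* A := by
  classical
  have hA_out : ∀ i ∈ S, ∀ j ∉ S, A i j = 0 := fun i hi j hj =>
    ((hA0 i j).lt_or_eq.resolve_left fun h => hj (hsink i hi j h)).symm
  -- Zeroing the rows outside `S` keeps `𝟙_S` a fixed vector and forces every left fixed vector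
  -- to vanish off `S`.
  set M : Matrix ι ι ℝ := of fun i j => if i ∈ S then A i j else 0
  have hM0 : ∀ i j, 0 ≤ M i j := fun i j => by
    simp only [M, of_apply]; split_ifs <;> simp [hA0]
  set u : ι → ℝ := fun i => if i ∈ S then 1 else 0
  have hu : u ≠ 0 := fun h => by
    obtain ⟨i, hi⟩ := hS
    simpa [u, hi] using congrFun h i
  have hMu : M *ᵥ u = u := by
    funext i
    by_cases hi : i ∈ S
    · simp only [mulVec, dotProduct, M, u, of_apply, if_pos hi]
      conv_rhs => rw [← hA1 i]
      refine Finset.sum_congr rfl fun j _ => ?_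
      by_cases hj : j ∈ S <;> simp [hj, hA_out i hi j]
    · simp [mulVec, dotProduct, M, u, hi]
  obtain ⟨v, hv0, hv⟩ := exists_vecMul_eq_self_of_mulVec_eq_self M hu hMu
  have hv_out : ∀ i ∉ S, v i = 0 := fun i hi => by
    rw [← hv]
    refine Finset.sum_eq_zero fun j _ => ?_
    by_cases hj : j ∈ S <;> simp [M, hj, hA_out j _ i hi]
  refine ⟨|v|, abs_nonneg v, by simpa using hv0, fun i hi => by simp [hv_out i hi], ?_⟩
  refine (abs_le_abs_vecMul_of_vecMul_eq_self hM0 hv).trans fun i => ?_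
  refine Finset.sum_le_sum fun j _ => mul_le_mul_of_nonneg_left ?_ (abs_nonneg (v j))
  simp only [M, of_apply]
  split_ifs <;> simp [hA0]

end Matrix

theorem exists_pos_mul_le {ι : Type*} [Finite ι] {d g : ι → ℝ} (hg : ∀ i, 0 ≤ g i)
    (hdg : ∀ i, 0 < d i → 0 < g i) : ∃ ε > 0, ∀ i, ε * d i ≤ g i := by
  have h : ∀ i, ∀ᶠ ε in 𝓝[>] (0 : ℝ), ε * d i ≤ g i := by
    intro i
    rcases lt_or_ge 0 (d i) with hd | hd
    · have hlim : Tendsto (fun ε : ℝ => ε * d i) (𝓝[>] 0) (𝓝 0) :=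
        ((continuous_mul_const (d i)).tendsto' 0 0 (zero_mul _)).mono_left nhdsWithin_le_nhds
      exact (hlim.eventually (gt_mem_nhds (hdg i hd))).mono fun _ => le_of_lt
    · filter_upwards [self_mem_nhdsWithin] with ε (hε : 0 < ε)
      exact (mul_nonpos_of_nonneg_of_nonpos hε.le hd).trans (hg i)
  exact ((eventually_mem_nhdsWithin (s := Set.Ioi 0)).and (eventually_all.2 h)).exists

theorem FeasibleVec.add_smul {n : ℕ} {A : Matrix (Fin n) (Fin n) ℝ} {c pbar p d : Fin n → ℝ}
    {ε : ℝ} (hp : FeasibleVec n A c pbar p) (hd : 0 ≤ d) (hsub : d ≤ d ᵥ* A) (hε : 0 ≤ ε)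
    (hroom : ∀ i, ε * d i ≤ pbar i - p i) : FeasibleVec n A c pbar (p + ε • d) := by
  obtain ⟨hp0, hp_le, hp_bal⟩ := hp
  refine ⟨fun i => ?_, fun i => ?_, fun i => ?_⟩
  · simpa using add_nonneg (hp0 i) (mul_nonneg hε (hd i))
  · have := hroom i
    simp only [Pi.add_apply, Pi.smul_apply, smul_eq_mul]
    linarith
  · have hε_sub := mul_le_mul_of_nonneg_left (hsub i) hε
    have := hp_bal i
    simp only [mulVec_add, mulVec_smul, mulVec_transpose] at this ⊢
    simp only [Pi.add_apply, Pi.smul_apply, smul_eq_mul]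
    linarith

theorem prorata_min_sink_full_payment_general (n : ℕ)
    (A : Matrix (Fin n) (Fin n) ℝ) (hA0 : ∀ i j, 0 ≤ A i j) (hA1 : ∀ i, ∑ j, A i j = 1)
    (c pbar : Fin n → ℝ)
    (f : (Fin n → ℝ) → ℝ) (hf : DecreasingOn n pbar f)
    (pstar : Fin n → ℝ) (hfeas : FeasibleVec n A c pbar pstar)
    (hmin : ∀ q, FeasibleVec n A c pbar q → f pstar ≤ f q) :
    ∀ V0 : Set (Fin n), IsSCC A V0 → IsSink A V0 → ∃ i ∈ V0, pstar i = pbar i := by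
  intro V0 hSCC hSink
  by_contra! hfull
  obtain ⟨d, hd0, hd_ne, hd_out, hd_sub⟩ :=
    exists_subinvariant_supported_on_sink A hA0 hA1 hSCC.1 hSink
  have hslack : ∀ i, 0 < d i → 0 < pbar i - pstar i := fun i hi => by
    have hiV : i ∈ V0 := by_contra fun h => hi.ne' (hd_out i h)
    exact sub_pos.2 ((hfeas.2.1 i).lt_of_ne (hfull i hiV))
  obtain ⟨ε, hε, hroom⟩ := exists_pos_mul_le (fun i => sub_nonneg.2 (hfeas.2.1 i)) hslack
  set q := pstar + ε • d
  have hq : FeasibleVec n A c pbar q := hfeas.add_smul hd0 hd_sub hε.le hroom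
  have hle : pstar ≤ q := le_add_of_nonneg_right (smul_nonneg hε.le hd0)
  have hne : pstar ≠ q := by simpa [q, hε.ne', eq_comm] using hd_ne
  exact (hf pstar q hfeas.1 hle hq.2.1 hne).not_ge (hmin q hq)

/-- Every strongly connected sink component of `G[A]` contains at least one node `i`
where the minimizer `p*` pays in full: `p* i = p̄ i`. -/
theorem prorata_min_sink_full_payment (n : ℕ) (hn : 1 ≤ n)
    (A : Matrix (Fin n) (Fin n) ℝ) (hA0 : ∀ i j, 0 ≤ A i j) (hA1 : ∀ i, ∑ j, A i j = 1)
    (c pbar : Fin n → ℝ) (hc : ∀ i, 0 ≤ c i) (hpbar : ∀ i, 0 ≤ pbar i)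
    (f : (Fin n → ℝ) → ℝ) (hf : DecreasingOn n pbar f)
    (pstar : Fin n → ℝ) (hfeas : FeasibleVec n A c pbar pstar)
    (hmin : ∀ q, FeasibleVec n A c pbar q → f pstar ≤ f q) :
    ∀ V0 : Set (Fin n), IsSCC A V0 → IsSink A V0 → ∃ i ∈ V0, pstar i = pbar i :=
  prorata_min_sink_full_payment_general n A hA0 hA1 c pbar f hf pstar hfeas hmin
end

section
/- Let A ∈ ℝ^{n×n} be row-stochastic and c, p̄ ∈ ℝ^n nonnegative. Then there is exactly one vector p satisfying the clearing fixed-point equation p = min(p̄, c + Aᵀp) (componentwise) together with the property that every strongly connected sink component of the digraph G[A] contains at least one node i with p_i = p̄_i; this vector is p* = p*[A,c,p̄], the unique minimizer over 𝒫_pr(c,p̄) = {p ∈ ℝ^n : 0 ≤ p ≤ p̄, p ≤ c + Aᵀp} of any decreasing function f : [0,p̄] → ℝ. -/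
/-!
Since the feasible set is closed under `⊔` and `f` is decreasing, `p*` is the greatest feasible
vector. Monotonicity of `p ↦ min(p̄, c + Aᵀp)` makes it a fixed point, and it saturates every sink
component `V`: otherwise `p* + εw` would be feasible, where `w ≥ 0` is a left eigenvector for the
eigenvalue `1` of the row-stochastic restriction of `A` to `V`.

For uniqueness, let `p ≤ min(p̄, c + Aᵀp)` and let `q` be a saturated fixed point. Where `p > q`
we have `q < p̄`, so `d = (p - q)⁺` satisfies `d ≤ Aᵀd`; as `Aᵀ` preserves sums, `d = Aᵀd`. The
support of `d` is then closed under the arcs of `G[A]`, so it contains a sink component, at a node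
of which `q = p̄ ≥ p`; hence `d = 0`. Applying this both ways compares `p*` with any saturated
fixed point.
-/

open Matrix Finset

open Filter Topology

theorem Relation.exists_reflTransGen_forall_reflTransGen_symm {α : Type*} [Finite α]
    (r : α → α → Prop) (a : α) :
    ∃ k, Relation.ReflTransGen r a k ∧
      ∀ m, Relation.ReflTransGen r k m → Relation.ReflTransGen r m k := by
  obtain ⟨k, hak, hmin⟩ := Set.Finite.exists_minimalFor
    (fun k => {m | Relation.ReflTransGen r k m}) {k | Relation.ReflTransGen r a k}
    (Set.toFinite _) ⟨a, .refl⟩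
  exact ⟨k, hak, fun m hkm => hmin (hak.trans hkm) (fun _ hx => hkm.trans hx) .refl⟩

theorem exists_pos_add_smul_le {ι : Type*} [Finite ι] {u v w : ι → ℝ} (huv : u ≤ v)
    (hlt : ∀ i, w i ≠ 0 → u i < v i) : ∃ ε : ℝ, 0 < ε ∧ u + ε • w ≤ v := by
  have hnear : ∀ᶠ ε in 𝓝 (0 : ℝ), ∀ i, u i + ε * w i ≤ v i := by
    refine eventually_all.2 fun i => ?_
    by_cases hw : w i = 0
    · simp [hw, huv i]
    · have hcont : ContinuousAt (fun ε : ℝ => u i + ε * w i) 0 := by fun_prop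
      refine (hcont.eventually_lt continuousAt_const (by simpa using hlt i hw)).mono
        fun _ h => h.le
  obtain ⟨ε, hle, hε⟩ :=
    ((hnear.filter_mono nhdsWithin_le_nhds).and (self_mem_nhdsWithin (s := Set.Ioi 0))).exists
  exact ⟨ε, hε, fun i => hle i⟩

namespace Matrix

variable {ι : Type*} [Fintype ι]

theorem mulVec_mono_of_nonneg_s5 {M : Matrix ι ι ℝ} (hM : ∀ i j, 0 ≤ M i j) :
    Monotone (M *ᵥ ·) :=
  fun _ _ h i => Finset.sum_le_sum fun j _ => mul_le_mul_of_nonneg_left (h j) (hM i j)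

variable [DecidableEq ι] {A : Matrix ι ι ℝ}

theorem mulVec_eq_of_le_of_mem_colStochastic {M : Matrix ι ι ℝ} (hM : M ∈ colStochastic ℝ ι)
    {d : ι → ℝ} (hd : d ≤ M *ᵥ d) : M *ᵥ d = d :=
  funext fun i => ((Finset.sum_eq_sum_iff_of_le fun i _ => hd i).1
    (sum_mulVec_of_mem_colStochastic hM).symm i (Finset.mem_univ i)).symm

theorem exists_nonneg_ne_zero_le_transpose_mulVec [Nonempty ι] (hA : A ∈ rowStochastic ℝ ι) :
    ∃ v, 0 ≤ v ∧ v ≠ 0 ∧ v ≤ Aᵀ *ᵥ v := by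
  have hker : (A - 1) *ᵥ 1 = 0 := by
    rw [sub_mulVec, one_mulVec, one_vecMul_of_mem_rowStochastic hA, sub_self]
  have hdet : (Aᵀ - 1).det = 0 := by
    rw [← transpose_one, ← transpose_sub, det_transpose]
    exact exists_mulVec_eq_zero_iff.1 ⟨1, one_ne_zero, hker⟩
  obtain ⟨v, hv0, hv⟩ := exists_mulVec_eq_zero_iff.2 hdet
  rw [sub_mulVec, one_mulVec, sub_eq_zero] at hv
  refine ⟨|v|, abs_nonneg v, fun h => hv0 (by simpa [funext_iff] using h), fun i => ?_⟩
  calc |v i| = |(Aᵀ *ᵥ v) i| := by rw [hv]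
    _ ≤ ∑ j, |A j i * v j| := Finset.abs_sum_le_sum_abs _ _
    _ = (Aᵀ *ᵥ |v|) i := by
      simp only [abs_mul, abs_of_nonneg (nonneg_of_mem_rowStochastic hA)]; rfl

end Matrix

section Graph

variable {n : ℕ} {A : Matrix (Fin n) (Fin n) ℝ}

theorem IsSink.mem_of_reach {V : Set (Fin n)} (hV : IsSink A V) {i j : Fin n} (hi : i ∈ V)
    (hij : Reach A i j) : j ∈ V := by
  induction hij with
  | refl => exact hi
  | tail _ hjk ih => exact hV _ ih _ hjk

theorem exists_isSCC_isSink_subset {D : Set (Fin n)} (hD : D.Nonempty) (hsink : IsSink A D) :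
    ∃ V0, IsSCC A V0 ∧ IsSink A V0 ∧ V0 ⊆ D := by
  obtain ⟨j, hj⟩ := hD
  obtain ⟨k, hjk, hback⟩ :=
    Relation.exists_reflTransGen_forall_reflTransGen_symm (fun a b => 0 < A a b) j
  refine ⟨{m | Reach A k m}, ⟨⟨k, .refl⟩, fun i hi _ hj => (hback i hi).trans hj,
    fun _ hi _ hij _ => hi.trans hij⟩, fun _ hi _ hij => hi.tail hij,
    fun _ hm => hsink.mem_of_reach (hsink.mem_of_reach hj hjk) hm⟩

theorem isSink_setOf_pos {d : Fin n → ℝ} (hA : ∀ i j, 0 ≤ A i j) (hd : 0 ≤ d)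
    (hAd : Aᵀ *ᵥ d ≤ d) : IsSink A {i | 0 < d i} := by
  intro j hj i hji
  calc 0 < A j i * d j := mul_pos hji hj
    _ ≤ ∑ k, A k i * d k :=
      Finset.single_le_sum (f := fun k => A k i * d k) (fun k _ => mul_nonneg (hA k i) (hd k))
        (Finset.mem_univ j)
    _ ≤ d i := hAd i

theorem IsSink.submatrix_mem_rowStochastic (hA : A ∈ rowStochastic ℝ (Fin n))
    {V : Set (Fin n)} [DecidablePred (· ∈ V)] (hsink : IsSink A V) :
    A.submatrix ((↑) : V → Fin n) (↑) ∈ rowStochastic ℝ V := by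
  refine mem_rowStochastic_iff_sum.2
    ⟨fun _ _ => nonneg_of_mem_rowStochastic hA, fun x => ?_⟩
  rw [← sum_row_of_mem_rowStochastic hA x]
  exact (Finset.sum_congr_set V (A x) (fun y => A x y) (fun _ _ => rfl) fun j hj =>
    ((nonneg_of_mem_rowStochastic hA).eq_or_lt.resolve_right
      fun h => hj (hsink x x.2 j h)).symm).symm

theorem IsSink.exists_nonneg_ne_zero_le_transpose_mulVec (hA : A ∈ rowStochastic ℝ (Fin n))
    {V : Set (Fin n)} (hV : V.Nonempty) (hsink : IsSink A V) :
    ∃ w, 0 ≤ w ∧ w ≠ 0 ∧ (∀ i ∉ V, w i = 0) ∧ w ≤ Aᵀ *ᵥ w := by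
  classical
  have := hV.to_subtype
  obtain ⟨v, hv0, hv_ne, hv⟩ :=
    Matrix.exists_nonneg_ne_zero_le_transpose_mulVec (hsink.submatrix_mem_rowStochastic hA)
  set w : Fin n → ℝ := fun i => if h : i ∈ V then v ⟨i, h⟩ else 0
  have hAw (i : Fin n) : (Aᵀ *ᵥ w) i = ∑ y : V, A y i * v y :=
    Finset.sum_congr_set V _ _ (fun j hj => by simp [w, hj]) fun j hj => by simp [w, hj]
  refine ⟨w, fun i => ?_, fun h => hv_ne (funext fun y => by simpa [w] using congrFun h y),
    fun i hi => dif_neg hi, fun i => ?_⟩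
  · unfold w; split_ifs
    exacts [hv0 _, le_rfl]
  rw [hAw]
  by_cases hi : i ∈ V
  · exact (dif_pos hi).trans_le (hv ⟨i, hi⟩)
  · exact (dif_neg hi).trans_le <| Finset.sum_nonneg fun y _ =>
      mul_nonneg (nonneg_of_mem_rowStochastic hA) (hv0 y)

end Graph

section Clearing

def IsClearingVec {n : ℕ} (A : Matrix (Fin n) (Fin n) ℝ) (c pbar q : Fin n → ℝ) : Prop :=
  ∀ i, q i = min (pbar i) (c i + (Aᵀ *ᵥ q) i)

def SinkSaturated {n : ℕ} (A : Matrix (Fin n) (Fin n) ℝ) (pbar q : Fin n → ℝ) : Prop :=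
  ∀ V0 : Set (Fin n), IsSCC A V0 → IsSink A V0 → ∃ i ∈ V0, q i = pbar i

variable {n : ℕ} {A : Matrix (Fin n) (Fin n) ℝ} {c pbar : Fin n → ℝ}

theorem IsClearingVec.eq_of_lt {q : Fin n → ℝ} (hq : IsClearingVec A c pbar q) {i : Fin n}
    (hi : q i < pbar i) : q i = c i + (Aᵀ *ᵥ q) i := by
  rw [hq i] at hi ⊢
  exact min_eq_right ((min_lt_iff.1 hi).resolve_left (lt_irrefl _)).le

theorem FeasibleVec.sup (hA : ∀ i j, 0 ≤ A i j) {p q : Fin n → ℝ}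
    (hp : FeasibleVec n A c pbar p) (hq : FeasibleVec n A c pbar q) :
    FeasibleVec n A c pbar (p ⊔ q) := by
  have hmono := mulVec_mono_of_nonneg_s5 (M := Aᵀ) fun i j => hA j i
  refine ⟨fun i => (hp.1 i).trans le_sup_left, fun i => sup_le (hp.2.1 i) (hq.2.1 i),
    fun i => sup_le ?_ ?_⟩
  · exact (hp.2.2 i).trans (add_le_add_right (hmono le_sup_left i) _)
  · exact (hq.2.2 i).trans (add_le_add_right (hmono le_sup_right i) _)

theorem FeasibleVec.clearing (hA : ∀ i j, 0 ≤ A i j) {p : Fin n → ℝ}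
    (hp : FeasibleVec n A c pbar p) :
    FeasibleVec n A c pbar (fun i => min (pbar i) (c i + (Aᵀ *ᵥ p) i)) := by
  have hle : p ≤ fun i => min (pbar i) (c i + (Aᵀ *ᵥ p) i) := fun i => le_min (hp.2.1 i) (hp.2.2 i)
  refine ⟨fun i => (hp.1 i).trans (hle i), fun i => min_le_left _ _, fun i => ?_⟩
  exact (min_le_right _ _).trans
    (add_le_add_right (mulVec_mono_of_nonneg_s5 (M := Aᵀ) (fun i j => hA j i) hle i) _)

theorem IsGreatest.isClearingVec (hA : ∀ i j, 0 ≤ A i j) {pstar : Fin n → ℝ}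
    (h : IsGreatest {p | FeasibleVec n A c pbar p} pstar) : IsClearingVec A c pbar pstar :=
  fun i => le_antisymm (le_min (h.1.2.1 i) (h.1.2.2 i)) (h.2 (h.1.clearing hA) i)

theorem isGreatest_of_decreasingOn (hA : ∀ i j, 0 ≤ A i j) {f : (Fin n → ℝ) → ℝ}
    (hf : DecreasingOn n pbar f) {pstar : Fin n → ℝ} (hfeas : FeasibleVec n A c pbar pstar)
    (hmin : ∀ q, FeasibleVec n A c pbar q → f pstar ≤ f q) :
    IsGreatest {p | FeasibleVec n A c pbar p} pstar := by
  refine ⟨hfeas, fun q hq => ?_⟩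
  have hsup := hfeas.sup hA hq
  have hsup_eq : pstar ⊔ q = pstar := by
    by_contra hne
    exact (hmin _ hsup).not_gt (hf _ _ hfeas.1 (le_sup_left : pstar ≤ _) hsup.2.1 (Ne.symm hne))
  exact hsup_eq ▸ le_sup_right

theorem IsGreatest.sinkSaturated (hA : A ∈ rowStochastic ℝ (Fin n)) {pstar : Fin n → ℝ}
    (h : IsGreatest {p | FeasibleVec n A c pbar p} pstar) : SinkSaturated A pbar pstar := by
  intro V0 hscc hsink
  by_contra! hlt
  obtain ⟨w, hw0, hw_ne, hw_supp, hw_le⟩ :=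
    hsink.exists_nonneg_ne_zero_le_transpose_mulVec hA hscc.1
  obtain ⟨ε, hε, hle⟩ := exists_pos_add_smul_le h.1.2.1 fun i hi =>
    (h.1.2.1 i).lt_of_ne (hlt i (not_imp_comm.1 (hw_supp i) hi))
  have hεw : 0 ≤ ε • w := smul_nonneg hε.le hw0
  have hfeas : FeasibleVec n A c pbar (pstar + ε • w) := by
    refine ⟨fun i => add_nonneg (h.1.1 i) (hεw i), hle, fun i => ?_⟩
    have := mul_le_mul_of_nonneg_left (hw_le i) hε.le
    simp only [Pi.add_apply, Pi.smul_apply, smul_eq_mul, mulVec_add, mulVec_smul]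
    linarith [h.1.2.2 i]
  have : ε • w ≤ 0 := by simpa using h.2 hfeas
  exact hw_ne (le_antisymm (fun i => nonpos_of_mul_nonpos_right (this i) hε) hw0)

theorem le_of_isClearingVec (hA : A ∈ rowStochastic ℝ (Fin n)) {p q : Fin n → ℝ}
    (hp : p ≤ pbar) (hpc : p ≤ c + Aᵀ *ᵥ p) (hq : IsClearingVec A c pbar q)
    (hqs : SinkSaturated A pbar q) : p ≤ q := by
  have hA0 : ∀ i j, 0 ≤ A i j := fun _ _ => nonneg_of_mem_rowStochastic hA
  have hmono := mulVec_mono_of_nonneg_s5 (M := Aᵀ) fun i j => hA0 j i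
  set d : Fin n → ℝ := fun i => max (p i - q i) 0
  have hd0 : 0 ≤ d := fun i => le_max_right _ _
  have hd_le : d ≤ Aᵀ *ᵥ d := by
    intro i
    rcases le_or_gt (p i) (q i) with hpq | hqp
    · exact (max_eq_right (sub_nonpos.2 hpq)).trans_le (by simpa using hmono hd0 i)
    · have hqi := hq.eq_of_lt (hqp.trans_le (hp i))
      have : (Aᵀ *ᵥ (p - q)) i ≤ (Aᵀ *ᵥ d) i := hmono (fun j => le_max_left _ _) i
      rw [mulVec_sub, Pi.sub_apply] at this
      have hpi : p i ≤ c i + (Aᵀ *ᵥ p) i := hpc i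
      show max (p i - q i) 0 ≤ _
      rw [max_eq_left (sub_nonneg.2 hqp.le)]
      linarith
  have hd_eq : Aᵀ *ᵥ d = d := mulVec_eq_of_le_of_mem_colStochastic
    (transpose_mem_colStochastic_iff_mem_rowStochastic.2 hA) hd_le
  intro i
  by_contra! hqp
  obtain ⟨V0, hscc, hsink, hsub⟩ := exists_isSCC_isSink_subset (D := {i | 0 < d i})
    ⟨i, lt_max_of_lt_left (sub_pos.2 hqp)⟩ (isSink_setOf_pos hA0 hd0 hd_eq.le)
  obtain ⟨j, hj, hqj⟩ := hqs V0 hscc hsink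
  have : q j < p j := by simpa [d] using hsub hj
  exact (hp j).not_gt (hqj ▸ this)

end Clearing

theorem prorata_unique_clearing_with_sink_property_general (n : ℕ)
    (A : Matrix (Fin n) (Fin n) ℝ) (hA0 : ∀ i j, 0 ≤ A i j) (hA1 : ∀ i, ∑ j, A i j = 1)
    (c pbar : Fin n → ℝ)
    (f : (Fin n → ℝ) → ℝ) (hf : DecreasingOn n pbar f)
    (pstar : Fin n → ℝ) (hfeas : FeasibleVec n A c pbar pstar)
    (hmin : ∀ q, FeasibleVec n A c pbar q → f pstar ≤ f q) :
    ((∀ i, pstar i = min (pbar i) (c i + Aᵀ.mulVec pstar i)) ∧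
      (∀ V0 : Set (Fin n), IsSCC A V0 → IsSink A V0 → ∃ i ∈ V0, pstar i = pbar i)) ∧
    (∀ q : Fin n → ℝ,
      (∀ i, q i = min (pbar i) (c i + Aᵀ.mulVec q i)) →
      (∀ V0 : Set (Fin n), IsSCC A V0 → IsSink A V0 → ∃ i ∈ V0, q i = pbar i) →
      q = pstar) := by
  have hA : A ∈ rowStochastic ℝ (Fin n) := mem_rowStochastic_iff_sum.2 ⟨hA0, hA1⟩
  have hgreatest := isGreatest_of_decreasingOn hA0 hf hfeas hmin
  have hclear : IsClearingVec A c pbar pstar := hgreatest.isClearingVec hA0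
  have hsat : SinkSaturated A pbar pstar := hgreatest.sinkSaturated hA
  refine ⟨⟨hclear, hsat⟩, fun q hq hqs => le_antisymm ?_ ?_⟩
  · exact le_of_isClearingVec hA (fun i => (hq i).trans_le (min_le_left _ _))
      (fun i => (hq i).trans_le (min_le_right _ _)) hclear hsat
  · exact le_of_isClearingVec hA hfeas.2.1 hfeas.2.2 hq hqs

/-- There is exactly one vector satisfying the clearing fixed-point equation
`p = min(p̄, c + Aᵀp)` together with the property that every strongly connected sink
component of `G[A]` contains a node paying its liability in full; this vector is the
minimizer `p*` over `𝒫_pr(c, p̄)` of any decreasing function. -/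
theorem prorata_unique_clearing_with_sink_property (n : ℕ) (hn : 1 ≤ n)
    (A : Matrix (Fin n) (Fin n) ℝ) (hA0 : ∀ i j, 0 ≤ A i j) (hA1 : ∀ i, ∑ j, A i j = 1)
    (c pbar : Fin n → ℝ) (hc : ∀ i, 0 ≤ c i) (hpbar : ∀ i, 0 ≤ pbar i)
    (f : (Fin n → ℝ) → ℝ) (hf : DecreasingOn n pbar f)
    (pstar : Fin n → ℝ) (hfeas : FeasibleVec n A c pbar pstar)
    (hmin : ∀ q, FeasibleVec n A c pbar q → f pstar ≤ f q) :
    ((∀ i, pstar i = min (pbar i) (c i + Aᵀ.mulVec pstar i)) ∧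
      (∀ V0 : Set (Fin n), IsSCC A V0 → IsSink A V0 → ∃ i ∈ V0, pstar i = pbar i)) ∧
    (∀ q : Fin n → ℝ,
      (∀ i, q i = min (pbar i) (c i + Aᵀ.mulVec q i)) →
      (∀ V0 : Set (Fin n), IsSCC A V0 → IsSink A V0 → ∃ i ∈ V0, q i = pbar i) →
      q = pstar) :=
  prorata_unique_clearing_with_sink_property_general n A hA0 hA1 c pbar f hf pstar hfeas hmin
end

section
/- Let [P] = (P(0),…,P(T−1)) be an optimal admissible sequence of payment matrices, i.e., a maximizer of ∑_{t=0}^{T−1} a_t 𝟙ᵀP(t)𝟙 over all admissible sequences, where a_t = ∑_{j=0}^{T−t−1} α^j. Then for each t with 1 ≤ t ≤ T−1, the weighted digraph G[P(t)] (arc i→j whenever P(t)_{ij} > 0) contains no directed cycles. -/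
open Matrix Finset

/-- A sequence `P(0), …, P(T-1)` of payment matrices is admissible: for every `t < T`,
`P(t) ≥ 0`, `∑_{k=0}^t α^{t-k} P(k) ≤ α^t P̄` entrywise, and
`C(t) + ∑_{k=0}^t (P(k)ᵀ - P(k))𝟙 ≥ 0`. -/
def AdmissibleSeq (n T : ℕ) (α : ℝ) (Pbar : Matrix (Fin n) (Fin n) ℝ)
    (c : ℕ → Fin n → ℝ) (P : ℕ → Matrix (Fin n) (Fin n) ℝ) : Prop :=
  ∀ t < T,
    (∀ i j, 0 ≤ P t i j) ∧
    (∀ i j, ∑ k ∈ Finset.range (t + 1), α ^ (t - k) * P k i j ≤ α ^ t * Pbar i j) ∧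
    (∀ i, 0 ≤ (∑ k ∈ Finset.range (t + 1), c k i) +
      ∑ k ∈ Finset.range (t + 1), ((P k)ᵀ.mulVec 1 i - (P k).mulVec 1 i))

/-- The coefficient `a_t = ∑_{j=0}^{T-t-1} α^j`. -/
def coeff (T : ℕ) (α : ℝ) (t : ℕ) : ℝ := ∑ j ∈ Finset.range (T - t), α ^ j

/-- The objective `∑_{t=0}^{T-1} a_t 𝟙ᵀ P(t) 𝟙`. -/
def objSeq (n T : ℕ) (a : ℕ → ℝ) (P : ℕ → Matrix (Fin n) (Fin n) ℝ) : ℝ :=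
  ∑ t ∈ Finset.range T, a t * ∑ i, ∑ j, P t i j

/-- The nominal liability matrices: `P̄(0) = P̄`, `P̄(t+1) = α (P̄(t) - P(t))`. -/
def nominalSeq {n : ℕ} (α : ℝ) (Pbar : Matrix (Fin n) (Fin n) ℝ)
    (P : ℕ → Matrix (Fin n) (Fin n) ℝ) : ℕ → Matrix (Fin n) (Fin n) ℝ
  | 0 => Pbar
  | t + 1 => α • (nominalSeq α Pbar P t - P t)

/-- The net worths: `w(0) = 0`, `w(t+1) = w(t) + c(t) + P(t)ᵀ𝟙 - P(t)𝟙`. -/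
def worthSeq {n : ℕ} (c : ℕ → Fin n → ℝ) (P : ℕ → Matrix (Fin n) (Fin n) ℝ) :
    ℕ → Fin n → ℝ
  | 0 => 0
  | t + 1 => worthSeq c P t + c t + (P t)ᵀ.mulVec 1 - (P t).mulVec 1


lemma std_row (n : ℕ) (p q w : Fin n) :
    ∑ j, Matrix.single p q (1:ℝ) w j = if w = p then 1 else 0 := by
  rcases eq_or_ne w p with h | h
  · subst h; simp [Matrix.single, Finset.sum_ite_eq]
  · simp [Matrix.single, Ne.symm h, h]

lemma std_col (n : ℕ) (p q w : Fin n) :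
    ∑ j, Matrix.single p q (1:ℝ) j w = if w = q then 1 else 0 := by
  rcases eq_or_ne w q with h | h
  · subst h; simp [Matrix.single, Finset.sum_ite_eq]
  · simp [Matrix.single, Ne.symm h, h]

lemma cycle_matrix {n : ℕ} (r : Fin n → Fin n → Prop) {a b : Fin n}
    (h : Relation.TransGen r a b) :
    ∃ (M : Matrix (Fin n) (Fin n) ℝ) (B : ℝ), 0 < B ∧
      (∀ i j, 0 ≤ M i j) ∧ (∀ i j, M i j ≤ B) ∧
      (∀ i j, 0 < M i j → r i j) ∧ (0 < ∑ i, ∑ j, M i j) ∧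
      (∀ v, (∑ j, M v j) + (if v = b then 1 else 0)
          = (∑ j, M j v) + (if v = a then 1 else 0)) := by
  induction h with
  | @single b' hr =>
    refine ⟨Matrix.single a b' 1, 1, one_pos, ?_, ?_, ?_, ?_, ?_⟩
    · intro i j; simp [Matrix.single]; split_ifs <;> norm_num
    · intro i j; simp [Matrix.single]; split_ifs <;> norm_num
    · intro i j hij
      simp only [Matrix.single, Matrix.of_apply] at hij
      split_ifs at hij with h'
      · obtain ⟨h1, h2⟩ := h'; subst h1; subst h2; exact hr
      · norm_num at hij
    · have : ∑ i, ∑ j, Matrix.single a b' (1:ℝ) i j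
          = ∑ i, (if i = a then (1:ℝ) else 0) := by
        apply Finset.sum_congr rfl; intro i _; exact std_row n a b' i
      rw [this]; simp [Finset.sum_ite_eq]
    · intro v
      rw [std_row n a b' v, std_col n a b' v]; ring
  | @tail b' c' h2 hr ih =>
    obtain ⟨M, B, hB, h0, hBd, hpos, hsum, hbal⟩ := ih
    have hstd0 : ∀ i j, (0:ℝ) ≤ Matrix.single b' c' (1:ℝ) i j := by
      intro i j; simp [Matrix.single]; split_ifs <;> norm_num
    have hstd1 : ∀ i j, Matrix.single b' c' (1:ℝ) i j ≤ 1 := by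
      intro i j; simp [Matrix.single]; split_ifs <;> norm_num
    refine ⟨M + Matrix.single b' c' 1, B + 1, by linarith, ?_, ?_, ?_, ?_, ?_⟩
    · intro i j
      have := h0 i j; have := hstd0 i j
      simp only [Matrix.add_apply]; linarith
    · intro i j
      have := hBd i j; have := hstd1 i j
      simp only [Matrix.add_apply]; linarith
    · intro i j hij
      simp only [Matrix.add_apply] at hij
      by_cases h' : 0 < M i j
      · exact hpos i j h'
      · have hM : M i j = 0 := le_antisymm (not_lt.mp h') (h0 i j)
        rw [hM, zero_add] at hij
        simp only [Matrix.single, Matrix.of_apply] at hij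
        split_ifs at hij with h''
        · obtain ⟨h1, h2⟩ := h''; subst h1; subst h2; exact hr
        · norm_num at hij
    · have hs2 : (0:ℝ) ≤ ∑ i, ∑ j, Matrix.single b' c' (1:ℝ) i j :=
        Finset.sum_nonneg fun i _ => Finset.sum_nonneg fun j _ => hstd0 i j
      have : ∑ i, ∑ j, (M + Matrix.single b' c' 1 : Matrix (Fin n) (Fin n) ℝ) i j
          = (∑ i, ∑ j, M i j) + ∑ i, ∑ j, Matrix.single b' c' (1:ℝ) i j := by
        rw [← Finset.sum_add_distrib]
        apply Finset.sum_congr rfl; intro i _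
        rw [← Finset.sum_add_distrib]
        apply Finset.sum_congr rfl; intro j _
        simp [Matrix.add_apply]
      rw [this]; linarith
    · intro v
      have E1 : ∑ j, (M + Matrix.single b' c' 1 : Matrix (Fin n) (Fin n) ℝ) v j
          = (∑ j, M v j) + (if v = b' then 1 else 0) := by
        rw [← std_row n b' c' v, ← Finset.sum_add_distrib]
        apply Finset.sum_congr rfl; intro j _; simp [Matrix.add_apply]
      have E2 : ∑ j, (M + Matrix.single b' c' 1 : Matrix (Fin n) (Fin n) ℝ) j v
          = (∑ j, M j v) + (if v = c' then 1 else 0) := by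
        rw [← std_col n b' c' v, ← Finset.sum_add_distrib]
        apply Finset.sum_congr rfl; intro j _; simp [Matrix.add_apply]
      rw [E1, E2]
      have := hbal v
      linarith

/-- For an optimal admissible sequence of payment matrices, the payment graph `G[P(t)]`
contains no directed cycles for every `1 ≤ t ≤ T-1`. -/
theorem optimal_payments_acyclic (n T : ℕ) (hn : 1 ≤ n) (hT : 1 ≤ T)
    (α : ℝ) (hα : 1 ≤ α)
    (Pbar : Matrix (Fin n) (Fin n) ℝ) (hPbar : ∀ i j, 0 ≤ Pbar i j)
    (hdiag : ∀ i, Pbar i i = 0)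
    (c : ℕ → Fin n → ℝ) (hc : ∀ t < T, ∀ i, 0 ≤ c t i)
    (P : ℕ → Matrix (Fin n) (Fin n) ℝ)
    (hadm : AdmissibleSeq n T α Pbar c P)
    (hopt : ∀ Q, AdmissibleSeq n T α Pbar c Q →
      objSeq n T (coeff T α) Q ≤ objSeq n T (coeff T α) P) :
    ∀ t, 1 ≤ t → t < T →
      ¬ ∃ i : Fin n, Relation.TransGen (fun a b => 0 < P t a b) i i := by
  rintro t ht1 htT ⟨i0, hcyc⟩
  have hα0 : (0:ℝ) < α := lt_of_lt_of_le one_pos hα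
  obtain ⟨M, B, hB, hM0, hMB, hMpos, hMsum, hbal'⟩ := cycle_matrix _ hcyc
  -- row/column balance
  have hbal : ∀ v, ∑ j, M v j = ∑ j, M j v := by
    intro v; have := hbal' v
    split_ifs at this <;> linarith
  -- nonnegativity of P at time t
  have hPt0 : ∀ i j, 0 ≤ P t i j := (hadm t htT).1
  -- the set of positive entries of M
  set F : Finset (Fin n × Fin n) := Finset.univ.filter (fun p => 0 < M p.1 p.2) with hF
  have hFne : F.Nonempty := by
    by_contra hne
    rw [Finset.not_nonempty_iff_eq_empty] at hne
    have : ∀ i j, M i j = 0 := by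
      intro i j
      by_contra h
      have hij : (i, j) ∈ F := by
        rw [hF, Finset.mem_filter]
        exact ⟨Finset.mem_univ _, lt_of_le_of_ne (hM0 i j) (Ne.symm h)⟩
      rw [hne] at hij; exact absurd hij (Finset.notMem_empty _)
    have : ∑ i, ∑ j, M i j = 0 := by
      apply Finset.sum_eq_zero; intro i _; apply Finset.sum_eq_zero; intro j _; exact this i j
    linarith
  set m : ℝ := F.inf' hFne (fun p => P t p.1 p.2) with hm
  have hmpos : 0 < m := by
    rw [hm, Finset.lt_inf'_iff]
    intro p hp
    rw [hF, Finset.mem_filter] at hp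
    exact hMpos p.1 p.2 hp.2
  set ε : ℝ := m / B with hε
  have hεpos : 0 < ε := div_pos hmpos hB
  have hεM : ∀ i j, ε * M i j ≤ P t i j := by
    intro i j
    rcases eq_or_lt_of_le (hM0 i j) with h | h
    · rw [← h, mul_zero]; exact hPt0 i j
    · have hmem : (i, j) ∈ F := by rw [hF, Finset.mem_filter]; exact ⟨Finset.mem_univ _, h⟩
      have h1 : m ≤ P t i j := Finset.inf'_le _ hmem
      have h2 : ε * M i j ≤ ε * B := by
        apply mul_le_mul_of_nonneg_left (hMB i j) (le_of_lt hεpos)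
      have h3 : ε * B = m := by rw [hε]; field_simp
      linarith
  -- the perturbation
  set δ : ℕ → ℝ := fun k => if k = t - 1 then ε / α else if k = t then -ε else 0 with hδ
  set Q : ℕ → Matrix (Fin n) (Fin n) ℝ := fun k => Matrix.of fun i j => P k i j + δ k * M i j
    with hQ
  have hQapp : ∀ k i j, Q k i j = P k i j + δ k * M i j := fun k i j => rfl
  have htne : t - 1 ≠ t := by omega
  -- the accumulated perturbation coefficient
  have hD : ∀ s, ∑ k ∈ Finset.range (s + 1), α ^ (s - k) * δ k
      = (if t - 1 ≤ s then α ^ (s - (t - 1)) * (ε / α) else 0)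
        + (if t ≤ s then α ^ (s - t) * (-ε) else 0) := by
    intro s
    have hterm : ∀ k ∈ Finset.range (s + 1), α ^ (s - k) * δ k
        = (if k = t - 1 then α ^ (s - (t - 1)) * (ε / α) else 0)
          + (if k = t then α ^ (s - t) * (-ε) else 0) := by
      intro k _
      simp only [hδ]
      rcases eq_or_ne k (t - 1) with h1 | h1
      · subst h1; rw [if_pos rfl, if_pos rfl, if_neg htne]; ring
      · rcases eq_or_ne k t with h2 | h2
        · subst h2; rw [if_neg h1, if_neg h1, if_pos rfl, if_pos rfl]; ring
        · rw [if_neg h1, if_neg h1, if_neg h2, if_neg h2]; ring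
    rw [Finset.sum_congr rfl hterm, Finset.sum_add_distrib,
      Finset.sum_ite_eq' (Finset.range (s+1)), Finset.sum_ite_eq' (Finset.range (s+1))]
    simp only [Finset.mem_range, Nat.lt_succ_iff]
  -- entrywise sum expansion
  have hexp : ∀ s i j, ∑ k ∈ Finset.range (s + 1), α ^ (s - k) * Q k i j
      = (∑ k ∈ Finset.range (s + 1), α ^ (s - k) * P k i j)
        + (∑ k ∈ Finset.range (s + 1), α ^ (s - k) * δ k) * M i j := by
    intro s i j
    rw [Finset.sum_mul, ← Finset.sum_add_distrib]
    apply Finset.sum_congr rfl; intro k _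
    rw [hQapp]; ring
  -- Q is admissible
  have hadmQ : AdmissibleSeq n T α Pbar c Q := by
    intro s hs
    obtain ⟨hP1, hP2, hP3⟩ := hadm s hs
    refine ⟨?_, ?_, ?_⟩
    · -- nonnegativity
      intro i j
      rw [hQapp]; simp only [hδ]
      rcases eq_or_ne s (t - 1) with h1 | h1
      · rw [if_pos h1]
        have : 0 ≤ ε / α * M i j := mul_nonneg (le_of_lt (div_pos hεpos hα0)) (hM0 i j)
        linarith [hP1 i j]
      · rcases eq_or_ne s t with h2 | h2
        · rw [if_neg h1, if_pos h2, h2]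
          have := hεM i j
          nlinarith
        · rw [if_neg h1, if_neg h2]
          simpa using hP1 i j
    · -- liability constraint
      intro i j
      rw [hexp, hD]
      rcases lt_or_ge s (t - 1) with h1 | h1
      · rw [if_neg (by omega), if_neg (by omega)]
        simpa using hP2 i j
      · rcases lt_or_ge s t with h2 | h2
        · -- s = t - 1
          have hst : s = t - 1 := by omega
          subst hst
          rw [if_pos le_rfl, if_neg (by omega)]
          have hrange : t - 1 + 1 = t := by omega
          -- constraint for P at time t
          obtain ⟨_, hPt2, _⟩ := hadm t htT
          have hkey := hPt2 i j
          rw [Finset.sum_range_succ] at hkey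
          have hshift : ∀ k ∈ Finset.range t, α ^ (t - k) * P k i j
              = α * (α ^ (t - 1 - k) * P k i j) := by
            intro k hk
            rw [Finset.mem_range] at hk
            rw [show t - k = (t - 1 - k) + 1 by omega, pow_succ]; ring
          rw [Finset.sum_congr rfl hshift, ← Finset.mul_sum] at hkey
          -- hkey : α * A + α^(t-t) * P t i j ≤ α^t * Pbar i j
          have hA : ∑ k ∈ Finset.range (t - 1 + 1), α ^ (t - 1 - k) * P k i j
              = ∑ k ∈ Finset.range t, α ^ (t - 1 - k) * P k i j := by rw [hrange]
          rw [hA]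
          have htt : t - t = 0 := by omega
          rw [htt, pow_zero, one_mul] at hkey
          have hsub0 : t - 1 - (t - 1) = 0 := by omega
          rw [hsub0, pow_zero, one_mul]
          have hpowt : α ^ t = α * α ^ (t - 1) := by
            have := pow_succ α (t - 1)
            rw [show t - 1 + 1 = t by omega] at this
            rw [this]; ring
          rw [hpowt] at hkey
          have hM' := hεM i j
          have hαinv : ε / α * M i j ≤ P t i j / α := by
            rw [div_mul_eq_mul_div, div_le_div_iff₀ hα0 hα0]
            nlinarith
          -- α * A + P t i j ≤ α * (α^(t-1) * Pbar i j)
          set A := ∑ k ∈ Finset.range t, α ^ (t - 1 - k) * P k i j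
          have : A + ε / α * M i j ≤ A + P t i j / α := by linarith
          have hdiv : A + P t i j / α ≤ α ^ (t - 1) * Pbar i j := by
            have h4 : α * (A + P t i j / α) = α * A + P t i j := by field_simp
            have h6 : α * (A + P t i j / α) ≤ α * (α ^ (t - 1) * Pbar i j) := by
              rw [h4]; nlinarith
            exact le_of_mul_le_mul_left h6 hα0
          linarith
        · -- s ≥ t
          rw [if_pos (by omega), if_pos h2]
          have hpow : α ^ (s - (t - 1)) = α ^ (s - t) * α := by
            rw [show s - (t - 1) = (s - t) + 1 by omega, pow_succ]
          rw [hpow]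
          have hz : α ^ (s - t) * α * (ε / α) + α ^ (s - t) * (-ε) = 0 := by
            field_simp; ring
          rw [hz, zero_mul, add_zero]
          exact hP2 i j
    · -- cash constraint
      intro i
      have hterm : ∀ k, (Q k)ᵀ.mulVec 1 i - (Q k).mulVec 1 i
          = (P k)ᵀ.mulVec 1 i - (P k).mulVec 1 i := by
        intro k
        simp only [Matrix.mulVec, Matrix.transpose_apply, dotProduct, Pi.one_apply, mul_one]
        simp only [hQapp]
        rw [Finset.sum_add_distrib, Finset.sum_add_distrib, ← Finset.mul_sum, ← Finset.mul_sum,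
          hbal i]
        ring
      have : ∑ k ∈ Finset.range (s + 1), ((Q k)ᵀ.mulVec 1 i - (Q k).mulVec 1 i)
          = ∑ k ∈ Finset.range (s + 1), ((P k)ᵀ.mulVec 1 i - (P k).mulVec 1 i) :=
        Finset.sum_congr rfl fun k _ => hterm k
      rw [this]
      exact hP3 i
  -- objective comparison
  have hc1 : coeff T α (t - 1) = 1 + α * coeff T α t := by
    unfold coeff
    rw [show T - (t - 1) = (T - t) + 1 by omega, Finset.sum_range_succ']
    simp only [pow_zero, pow_succ]
    rw [← Finset.sum_mul]
    ring
  have hobj : objSeq n T (coeff T α) Q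
      = objSeq n T (coeff T α) P + (ε / α) * (∑ i, ∑ j, M i j) := by
    unfold objSeq
    have hterm : ∀ s ∈ Finset.range T, coeff T α s * ∑ i, ∑ j, Q s i j
        = coeff T α s * (∑ i, ∑ j, P s i j) + (coeff T α s * δ s) * (∑ i, ∑ j, M i j) := by
      intro s _
      have : ∑ i, ∑ j, Q s i j = (∑ i, ∑ j, P s i j) + δ s * (∑ i, ∑ j, M i j) := by
        rw [Finset.mul_sum, ← Finset.sum_add_distrib]
        apply Finset.sum_congr rfl; intro i _
        rw [Finset.mul_sum, ← Finset.sum_add_distrib]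
        apply Finset.sum_congr rfl; intro j _
        rw [hQapp]
      rw [this]; ring
    rw [Finset.sum_congr rfl hterm, Finset.sum_add_distrib, ← Finset.sum_mul]
    congr 1
    have hdsum : ∑ s ∈ Finset.range T, coeff T α s * δ s = ε / α := by
      have hterm2 : ∀ s ∈ Finset.range T, coeff T α s * δ s
          = (if s = t - 1 then coeff T α (t - 1) * (ε / α) else 0)
            + (if s = t then coeff T α t * (-ε) else 0) := by
        intro s _
        simp only [hδ]
        rcases eq_or_ne s (t - 1) with h1 | h1
        · subst h1; rw [if_pos rfl, if_pos rfl, if_neg htne]; ring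
        · rcases eq_or_ne s t with h2 | h2
          · subst h2; rw [if_neg h1, if_neg h1, if_pos rfl, if_pos rfl]; ring
          · rw [if_neg h1, if_neg h1, if_neg h2, if_neg h2]; ring
      rw [Finset.sum_congr rfl hterm2, Finset.sum_add_distrib,
        Finset.sum_ite_eq' (Finset.range T), Finset.sum_ite_eq' (Finset.range T)]
      rw [if_pos (Finset.mem_range.mpr (by omega)), if_pos (Finset.mem_range.mpr htT)]
      rw [hc1]
      field_simp
      ring
    rw [hdsum]
  have hlt : objSeq n T (coeff T α) P < objSeq n T (coeff T α) Q := by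
    rw [hobj]
    have : 0 < (ε / α) * (∑ i, ∑ j, M i j) := mul_pos (div_pos hεpos hα0) hMsum
    linarith
  exact absurd (hopt Q hadmQ) (not_le.mpr hlt)
end

section
/- Under the pro-rata dynamic model, the optimization problem max ∑_{t=0}^{T−1} a_t 𝟙ᵀp(t) over all admissible payment-vector sequences [p] = (p(0),…,p(T−1)), where a_t = ∑_{j=0}^{T−t−1} α^j, has a unique maximizer [p*]. -/
open Matrix Finset

/-- A sequence `p(0), …, p(T-1)` of payment vectors is admissible in the pro-rata
dynamic model: for every `t < T`, `p(t) ≥ 0`,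
`∑_{k=0}^t α^{t-k} p(k) ≤ α^t p̄`, and `C(t) + ∑_{k=0}^t (Aᵀp(k) - p(k)) ≥ 0`. -/
def AdmissibleVecSeq (n T : ℕ) (α : ℝ) (A : Matrix (Fin n) (Fin n) ℝ)
    (pbar : Fin n → ℝ) (c : ℕ → Fin n → ℝ) (p : ℕ → Fin n → ℝ) : Prop :=
  ∀ t < T,
    (∀ i, 0 ≤ p t i) ∧
    (∀ i, ∑ k ∈ Finset.range (t + 1), α ^ (t - k) * p k i ≤ α ^ t * pbar i) ∧
    (∀ i, 0 ≤ (∑ k ∈ Finset.range (t + 1), c k i) +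
      ∑ k ∈ Finset.range (t + 1), (Aᵀ.mulVec (p k) i - p k i))

/-- The objective `∑_{t=0}^{T-1} a_t 𝟙ᵀ p(t)`. -/
def objVecSeq (n T : ℕ) (a : ℕ → ℝ) (p : ℕ → Fin n → ℝ) : ℝ :=
  ∑ t ∈ Finset.range T, a t * ∑ i, p t i

/-- The residual nominal liabilities `p̄*(t) = α^t p̄ - ∑_{k<t} α^{t-k} p(k)`. -/
def nominalVec {n : ℕ} (α : ℝ) (pbar : Fin n → ℝ) (p : ℕ → Fin n → ℝ) (t : ℕ) :
    Fin n → ℝ :=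
  fun i => α ^ t * pbar i - ∑ k ∈ Finset.range t, α ^ (t - k) * p k i

/-- The net worths `w*(t) = C(t-1) + ∑_{k<t} (Aᵀp(k) - p(k))`. -/
def worthVec {n : ℕ} (A : Matrix (Fin n) (Fin n) ℝ) (c : ℕ → Fin n → ℝ)
    (p : ℕ → Fin n → ℝ) (t : ℕ) : Fin n → ℝ :=
  fun i => (∑ k ∈ Finset.range t, c k i) +
    ∑ k ∈ Finset.range t, (Aᵀ.mulVec (p k) i - p k i)

/-! Write `y(t) = ∑_{k ≤ t} α^{t-k} p(k)` for the discounted cumulative payments; the objective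
is `∑_t 𝟙ᵀ y(t)`, and since `α ≥ 1` admissibility puts each `y(t)` in the Eisenberg–Noe type set
`{z | 0 ≤ z ≤ α^t p̄, z ≤ Ĉ(t) + Aᵀ z}`, where `Ĉ(t) = ∑_{k ≤ t} α^{t-k} c(k)`.
That set is compact and closed under `⊔`, so it has a greatest element `z*(t)`, which is a
clearing vector `z*(t) = α^t p̄ ⊓ (Ĉ(t) + Aᵀ z*(t))`. The payments `p*(t) = z*(t) - α z*(t-1)` are
therefore admissible; their `y` is `z*`, which dominates the `y` of every admissible sequence, and a
second maximizer must have the same `y`, hence the same payments. -/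

section Discounting

variable {R E : Type*}

def discountedSum [Semiring R] [AddCommMonoid E] [Module R E] (α : R) (p : ℕ → E) (t : ℕ) : E :=
  ∑ k ∈ range (t + 1), α ^ (t - k) • p k

def discountedDiff [Ring R] [AddCommGroup E] [Module R E] (α : R) (z : ℕ → E) : ℕ → E
  | 0 => z 0
  | t + 1 => z (t + 1) - α • z t

section Semiring

variable [Semiring R] [AddCommMonoid E] [Module R E] (α : R) (p : ℕ → E)

@[simp]
theorem discountedSum_zero : discountedSum α p 0 = p 0 := by
  simp [discountedSum]

theorem discountedSum_succ (t : ℕ) :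
    discountedSum α p (t + 1) = α • discountedSum α p t + p (t + 1) := by
  rw [discountedSum, sum_range_succ, Nat.sub_self, pow_zero, one_smul, discountedSum, smul_sum]
  congr 1
  refine sum_congr rfl fun k hk => ?_
  rw [Nat.sub_add_comm (Nat.lt_succ_iff.mp (mem_range.mp hk)), pow_succ', mul_smul]

end Semiring

section Ring

variable [Ring R] [AddCommGroup E] [Module R E] (α : R)

@[simp]
theorem discountedSum_discountedDiff (z : ℕ → E) (t : ℕ) :
    discountedSum α (discountedDiff α z) t = z t := by
  induction t with
  | zero => exact discountedSum_zero α _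
  | succ t ih => rw [discountedSum_succ, ih, discountedDiff, add_sub_cancel]

theorem discountedDiff_discountedSum (p : ℕ → E) (t : ℕ) :
    discountedDiff α (discountedSum α p) t = p t := by
  cases t with
  | zero => exact discountedSum_zero α p
  | succ t => rw [discountedDiff, discountedSum_succ, add_sub_cancel_left]

theorem discountedSum_sub (p q : ℕ → E) (t : ℕ) :
    discountedSum α (fun k => p k - q k) t = discountedSum α p t - discountedSum α q t := by
  simp only [discountedSum, smul_sub, sum_sub_distrib]

theorem discountedDiff_congr {y z : ℕ → E} {t : ℕ} (h : ∀ s ≤ t, y s = z s) :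
    discountedDiff α y t = discountedDiff α z t := by
  cases t with
  | zero => exact h 0 le_rfl
  | succ t => simp only [discountedDiff, h t t.le_succ, h (t + 1) le_rfl]

end Ring

theorem Matrix.mulVec_discountedSum {m : Type*} [Fintype m] {S : Type*} [CommSemiring S]
    (M : Matrix m m S) (α : S) (p : ℕ → m → S) (t : ℕ) :
    M *ᵥ discountedSum α p t = discountedSum α (fun k => M *ᵥ p k) t := by
  simp only [discountedSum, mulVec_sum, mulVec_smul]

section Ordered

variable [Semiring R] [PartialOrder R] [AddCommMonoid E] [PartialOrder E] [IsOrderedAddMonoid E]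
  [Module R E]

theorem discountedSum_nonneg [IsOrderedRing R] [PosSMulMono R E] {α : R} (hα : 0 ≤ α)
    {p : ℕ → E} {t : ℕ} (hp : ∀ k ≤ t, 0 ≤ p k) : 0 ≤ discountedSum α p t :=
  sum_nonneg fun k hk =>
    smul_nonneg (pow_nonneg hα _) (hp k (Nat.lt_succ_iff.mp (mem_range.mp hk)))

theorem sum_range_le_discountedSum [SMulPosMono R E] {α : R} (hα : 1 ≤ α) {h : ℕ → E} {t : ℕ}
    (hh : ∀ s ≤ t, 0 ≤ ∑ k ∈ range (s + 1), h k) :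
    ∑ k ∈ range (t + 1), h k ≤ discountedSum α h t := by
  induction t with
  | zero => simp
  | succ t ih =>
    have ih := ih fun s hs => hh s (hs.trans t.le_succ)
    rw [sum_range_succ, discountedSum_succ]
    gcongr
    exact ih.trans (le_smul_of_one_le_left ((hh t t.le_succ).trans ih) hα)

end Ordered

end Discounting

theorem IsCompact.exists_isGreatest_of_directedOn {α : Type*} [Preorder α] [TopologicalSpace α]
    [ClosedIciTopology α] {s : Set α} (hs : IsCompact s) (hne : s.Nonempty)
    (hd : DirectedOn (· ≤ ·) s) : ∃ x, IsGreatest s x := by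
  have : Nonempty s := hne.to_subtype
  suffices (s ∩ ⋂ x : s, Set.Ici (x : α)).Nonempty by
    obtain ⟨x, hxs, hx⟩ := this
    exact ⟨x, hxs, fun y hy => Set.mem_iInter.mp hx ⟨y, hy⟩⟩
  by_contra! H
  obtain ⟨x, hx⟩ := hs.elim_directed_family_closed _ (fun _ => isClosed_Ici) H
    (hd.directed_val.mono_comp (g := Set.Ici) _ fun _ _ => Set.Ici_subset_Ici.mpr)
  exact hx.subset ⟨x.2, le_rfl⟩

section Clearing

variable {ι : Type*} [Fintype ι] {M : Matrix ι ι ℝ}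

theorem Matrix.mulVec_mono_of_nonneg_s10 (hM : ∀ i j, 0 ≤ M i j) {v w : ι → ℝ} (h : v ≤ w) :
    M *ᵥ v ≤ M *ᵥ w :=
  fun i => sum_le_sum fun j _ => mul_le_mul_of_nonneg_left (h j) (hM i j)

variable (M) in
def clearingSet (u b : ι → ℝ) : Set (ι → ℝ) :=
  {z | 0 ≤ z ∧ z ≤ u ∧ z ≤ b + M *ᵥ z}

variable {u b : ι → ℝ}

theorem supClosed_clearingSet (hM : ∀ i j, 0 ≤ M i j) : SupClosed (clearingSet M u b) := by
  rintro z ⟨hz0, hzu, hzb⟩ w ⟨hw0, hwu, hwb⟩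
  have hmono := fun x (hx : x ≤ z ⊔ w) => add_le_add_right (M.mulVec_mono_of_nonneg_s10 hM hx) b
  exact ⟨hz0.trans le_sup_left, sup_le hzu hwu,
    sup_le (hzb.trans (hmono z le_sup_left)) (hwb.trans (hmono w le_sup_right))⟩

theorem isCompact_clearingSet : IsCompact (clearingSet M u b) := by
  refine isCompact_Icc.of_isClosed_subset ?_ fun z hz => ⟨hz.1, hz.2.1⟩
  exact (isClosed_le continuous_const continuous_id).inter <|
    (isClosed_le continuous_id continuous_const).inter <|
      isClosed_le continuous_id
        (continuous_const.add (continuous_const.matrix_mulVec continuous_id))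

theorem exists_isGreatest_clearingSet (hM : ∀ i j, 0 ≤ M i j) (hu : 0 ≤ u) (hb : 0 ≤ b) :
    ∃ w, IsGreatest (clearingSet M u b) w :=
  isCompact_clearingSet.exists_isGreatest_of_directedOn
    ⟨0, le_rfl, hu, by simpa using hb⟩ (supClosed_clearingSet hM).directedOn

-- The greatest point is a clearing vector: `u ⊓ (b + M w)` lies in the set, above `w`.
theorem IsGreatest.eq_inf_clearingSet (hM : ∀ i j, 0 ≤ M i j) {w : ι → ℝ}
    (hw : IsGreatest (clearingSet M u b) w) : w = u ⊓ (b + M *ᵥ w) := by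
  obtain ⟨⟨hw0, hwu, hwb⟩, hmax⟩ := hw
  have hle : w ≤ u ⊓ (b + M *ᵥ w) := le_inf hwu hwb
  refine le_antisymm hle (hmax ⟨hw0.trans hle, inf_le_left, ?_⟩)
  exact inf_le_right.trans (add_le_add_right (M.mulVec_mono_of_nonneg_s10 hM hle) b)

theorem smul_mem_clearingSet {a : ℝ} (ha : 0 ≤ a) {b' : ι → ℝ}
    (hb : a • b ≤ b') {z : ι → ℝ} (hz : z ∈ clearingSet M u b) :
    a • z ∈ clearingSet M (a • u) b' := by
  obtain ⟨hz0, hzu, hzb⟩ := hz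
  refine ⟨smul_nonneg ha hz0, smul_le_smul_of_nonneg_left hzu ha, ?_⟩
  calc a • z ≤ a • (b + M *ᵥ z) := smul_le_smul_of_nonneg_left hzb ha
    _ = a • b + M *ᵥ (a • z) := by rw [smul_add, mulVec_smul]
    _ ≤ b' + M *ᵥ (a • z) := add_le_add_left hb _

-- Coordinatewise, either `w i` is capped at `u i`, so `w' i ≤ a * w i`, or `w i - (M w) i = b i`.
theorem IsGreatest.clearingSet_step (hM : ∀ i j, 0 ≤ M i j) {a : ℝ} (ha : 0 ≤ a) {b' : ι → ℝ}
    (hb : a • b ≤ b') {w w' : ι → ℝ} (hw : IsGreatest (clearingSet M u b) w)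
    (hw' : IsGreatest (clearingSet M (a • u) b') w') :
    a • w ≤ w' ∧ (w' - M *ᵥ w') - a • (w - M *ᵥ w) ≤ b' - a • b := by
  have hmono : a • w ≤ w' := hw'.2 (smul_mem_clearingSet ha hb hw.1)
  refine ⟨hmono, fun i => ?_⟩
  have hMmono : a * (M *ᵥ w) i ≤ (M *ᵥ w') i := by
    simpa [mulVec_smul] using M.mulVec_mono_of_nonneg_s10 hM hmono i
  have hbi : a * b i ≤ b' i := hb i
  have hfix := congrFun (hw.eq_inf_clearingSet hM) i
  show (w' i - (M *ᵥ w') i) - a * (w i - (M *ᵥ w) i) ≤ b' i - a * b i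
  rw [Pi.inf_apply, Pi.add_apply] at hfix
  rcases min_choice (u i) (b i + (M *ᵥ w) i) with h | h <;> rw [h] at hfix
  · have hcap : w' i ≤ a * u i := hw'.1.2.1 i
    rw [hfix]
    linarith
  · have hcash : w' i ≤ b' i + (M *ᵥ w') i := hw'.1.2.2 i
    rw [hfix]
    linarith

end Clearing

section Model

variable {n T : ℕ} {α : ℝ} {A : Matrix (Fin n) (Fin n) ℝ} {pbar : Fin n → ℝ} {c : ℕ → Fin n → ℝ}

theorem admissibleVecSeq_iff {p : ℕ → Fin n → ℝ} :
    AdmissibleVecSeq n T α A pbar c p ↔ ∀ t < T, 0 ≤ p t ∧ discountedSum α p t ≤ α ^ t • pbar ∧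
      ∑ k ∈ range (t + 1), (p k - Aᵀ *ᵥ p k) ≤ ∑ k ∈ range (t + 1), c k := by
  refine forall₂_congr fun t _ => and_congr Iff.rfl (and_congr ?_ (forall_congr' fun i => ?_))
  · simp [Pi.le_def, discountedSum, Finset.sum_apply]
  · simp only [Finset.sum_apply, Pi.sub_apply, sum_sub_distrib]
    constructor <;> intro h <;> linarith

theorem AdmissibleVecSeq.discountedSum_mem (hα : 1 ≤ α) {p : ℕ → Fin n → ℝ}
    (hp : AdmissibleVecSeq n T α A pbar c p) {t : ℕ} (ht : t < T) :
    discountedSum α p t ∈ clearingSet Aᵀ (α ^ t • pbar) (discountedSum α c t) := by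
  rw [admissibleVecSeq_iff] at hp
  refine ⟨discountedSum_nonneg (zero_le_one.trans hα) fun k hk => (hp k (by omega)).1,
    (hp t ht).2.1, ?_⟩
  have hpartial : ∀ s ≤ t, 0 ≤ ∑ k ∈ range (s + 1), (c k - (p k - Aᵀ *ᵥ p k)) := fun s hs => by
    simpa only [sum_sub_distrib, sub_nonneg] using (hp s (by omega)).2.2
  have hnet := (hpartial t le_rfl).trans (sum_range_le_discountedSum hα hpartial)
  rwa [discountedSum_sub, discountedSum_sub, ← mulVec_discountedSum,
    sub_nonneg, sub_le_iff_le_add] at hnet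

theorem coeff_succ {t : ℕ} (ht : t ≤ T) : coeff (T + 1) α t = coeff T α t + α ^ (T - t) := by
  rw [coeff, coeff, Nat.sub_add_comm ht, sum_range_succ]

theorem objVecSeq_coeff (p : ℕ → Fin n → ℝ) :
    objVecSeq n T (coeff T α) p = ∑ t ∈ range T, ∑ i, discountedSum α p t i := by
  induction T with
  | zero => simp [objVecSeq]
  | succ T ih =>
    have hcoeff : ∀ t ∈ range (T + 1), coeff (T + 1) α t * ∑ i, p t i
        = coeff T α t * ∑ i, p t i + α ^ (T - t) * ∑ i, p t i := fun t ht => by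
      rw [coeff_succ (Nat.lt_succ_iff.mp (mem_range.mp ht)), add_mul]
    rw [objVecSeq, sum_congr rfl hcoeff, sum_add_distrib, sum_range_succ _ T, coeff,
      Nat.sub_self, sum_range_zero, zero_mul, add_zero, ← objVecSeq, ih,
      sum_range_succ (fun t => ∑ i, discountedSum α p t i) T]
    congr 1
    simp only [discountedSum, Finset.sum_apply, Pi.smul_apply, smul_eq_mul, mul_sum]
    exact sum_comm

theorem discountedDiff_nonneg_and_sub_mulVec_le (hα : 1 ≤ α) (hA0 : ∀ i j, 0 ≤ A i j)
    (hc : ∀ t < T, 0 ≤ c t) {z : ℕ → Fin n → ℝ}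
    (hz : ∀ t < T, IsGreatest (clearingSet Aᵀ (α ^ t • pbar) (discountedSum α c t)) (z t))
    {t : ℕ} (ht : t < T) :
    0 ≤ discountedDiff α z t ∧ discountedDiff α z t - Aᵀ *ᵥ discountedDiff α z t ≤ c t := by
  cases t with
  | zero =>
    obtain ⟨hz0, -, hzc⟩ := (hz 0 ht).1
    rw [discountedSum_zero] at hzc
    exact ⟨hz0, sub_le_iff_le_add.mpr hzc⟩
  | succ s =>
    have hcash : α • discountedSum α c s ≤ discountedSum α c (s + 1) := by
      rw [discountedSum_succ]
      exact le_add_of_nonneg_right (hc _ ht)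
    have hz' := hz (s + 1) ht
    rw [pow_succ', mul_smul] at hz'
    obtain ⟨hmono, hnet⟩ :=
      (hz s (by omega)).clearingSet_step (fun i j => hA0 j i) (by positivity) hcash hz'
    refine ⟨sub_nonneg.mpr hmono, ?_⟩
    rw [discountedSum_succ, add_sub_cancel_left] at hnet
    convert hnet using 1
    rw [discountedDiff, mulVec_sub, mulVec_smul, smul_sub]
    abel

theorem admissibleVecSeq_discountedDiff (hα : 1 ≤ α) (hA0 : ∀ i j, 0 ≤ A i j)
    (hc : ∀ t < T, 0 ≤ c t) {z : ℕ → Fin n → ℝ}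
    (hz : ∀ t < T, IsGreatest (clearingSet Aᵀ (α ^ t • pbar) (discountedSum α c t)) (z t)) :
    AdmissibleVecSeq n T α A pbar c (discountedDiff α z) := by
  rw [admissibleVecSeq_iff]
  intro t ht
  refine ⟨(discountedDiff_nonneg_and_sub_mulVec_le hα hA0 hc hz ht).1, ?_, ?_⟩
  · rw [discountedSum_discountedDiff]
    exact (hz t ht).1.2.1
  · exact sum_le_sum fun k hk =>
      (discountedDiff_nonneg_and_sub_mulVec_le hα hA0 hc hz (by have := mem_range.mp hk; omega)).2

end Model

theorem Finset.eq_of_le_of_sum_sum_eq {κ ι M : Type*} [Fintype ι] [AddCommMonoid M]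
    [PartialOrder M] [IsOrderedCancelAddMonoid M] {s : Finset κ} {y z : κ → ι → M}
    (hle : ∀ t ∈ s, y t ≤ z t) (heq : ∑ t ∈ s, ∑ i, y t i = ∑ t ∈ s, ∑ i, z t i) :
    ∀ t ∈ s, y t = z t := fun t ht => funext fun i =>
  (sum_eq_sum_iff_of_le fun i _ => hle t ht i).mp
    ((sum_eq_sum_iff_of_le fun t ht => sum_le_sum fun i _ => hle t ht i).mp heq t ht) i
    (mem_univ i)

theorem prorata_dynamic_unique_maximizer_general (n T : ℕ)
    (α : ℝ) (hα : 1 ≤ α)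
    (A : Matrix (Fin n) (Fin n) ℝ) (hA0 : ∀ i j, 0 ≤ A i j)
    (pbar : Fin n → ℝ) (hpbar : ∀ i, 0 ≤ pbar i)
    (c : ℕ → Fin n → ℝ) (hc : ∀ t < T, ∀ i, 0 ≤ c t i) :
    ∃ pstar : ℕ → Fin n → ℝ,
      AdmissibleVecSeq n T α A pbar c pstar ∧
      (∀ q, AdmissibleVecSeq n T α A pbar c q →
        objVecSeq n T (coeff T α) q ≤ objVecSeq n T (coeff T α) pstar) ∧
      (∀ q, AdmissibleVecSeq n T α A pbar c q →
        (∀ r, AdmissibleVecSeq n T α A pbar c r →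
          objVecSeq n T (coeff T α) r ≤ objVecSeq n T (coeff T α) q) →
        ∀ t < T, q t = pstar t) := by
  have hα0 : 0 ≤ α := zero_le_one.trans hα
  choose! z hz using fun t (ht : t < T) =>
    exists_isGreatest_clearingSet (M := Aᵀ) (fun i j => hA0 j i)
      (smul_nonneg (pow_nonneg hα0 t) hpbar)
      (discountedSum_nonneg (t := t) hα0 fun k hk => hc k (by omega))
  have hadm := admissibleVecSeq_discountedDiff hα hA0 hc hz
  have hdom : ∀ q, AdmissibleVecSeq n T α A pbar c q → ∀ t ∈ range T, discountedSum α q t ≤ z t :=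
    fun q hq t ht => (hz t (mem_range.mp ht)).2 (hq.discountedSum_mem hα (mem_range.mp ht))
  have hopt : ∀ q, AdmissibleVecSeq n T α A pbar c q →
      objVecSeq n T (coeff T α) q ≤ objVecSeq n T (coeff T α) (discountedDiff α z) := by
    intro q hq
    simp only [objVecSeq_coeff, discountedSum_discountedDiff]
    exact sum_le_sum fun t ht => sum_le_sum fun i _ => hdom q hq t ht i
  refine ⟨discountedDiff α z, hadm, hopt, fun q hq hmax t ht => ?_⟩
  have hq_eq : ∀ s ∈ range T, discountedSum α q s = z s := by
    refine eq_of_le_of_sum_sum_eq (hdom q hq) ?_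
    simpa [objVecSeq_coeff] using le_antisymm (hopt q hq) (hmax _ hadm)
  rw [← discountedDiff_discountedSum α q t]
  exact discountedDiff_congr α fun s hs => hq_eq s (mem_range.mpr (by omega))

/-- In the pro-rata dynamic model, the maximization of `∑_{t<T} a_t 𝟙ᵀp(t)` over all
admissible payment-vector sequences has a maximizer which is unique (any two maximizers
agree at every period `t < T`). -/
theorem prorata_dynamic_unique_maximizer (n T : ℕ) (hn : 1 ≤ n) (hT : 1 ≤ T)
    (α : ℝ) (hα : 1 ≤ α)
    (A : Matrix (Fin n) (Fin n) ℝ) (hA0 : ∀ i j, 0 ≤ A i j) (hA1 : ∀ i, ∑ j, A i j = 1)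
    (pbar : Fin n → ℝ) (hpbar : ∀ i, 0 ≤ pbar i)
    (c : ℕ → Fin n → ℝ) (hc : ∀ t < T, ∀ i, 0 ≤ c t i) :
    ∃ pstar : ℕ → Fin n → ℝ,
      AdmissibleVecSeq n T α A pbar c pstar ∧
      (∀ q, AdmissibleVecSeq n T α A pbar c q →
        objVecSeq n T (coeff T α) q ≤ objVecSeq n T (coeff T α) pstar) ∧
      (∀ q, AdmissibleVecSeq n T α A pbar c q →
        (∀ r, AdmissibleVecSeq n T α A pbar c r →
          objVecSeq n T (coeff T α) r ≤ objVecSeq n T (coeff T α) q) →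
        ∀ t < T, q t = pstar t) :=
  prorata_dynamic_unique_maximizer_general n T α hα A hA0 pbar hpbar c hc
end

section
/- Under the pro-rata dynamic model, let [p*] be the unique maximizer of ∑_{t=0}^{T−1} a_t 𝟙ᵀp(t) over all admissible sequences, where a_t = ∑_{j=0}^{T−t−1} α^j, and define p̄*(0) = p̄, w*(0) = 0, and for t ≥ 1: p̄*(t) = α^t p̄ − ∑_{k=0}^{t−1} α^{t−k} p*(k) and w*(t) = C(t−1) + ∑_{k=0}^{t−1}(Aᵀp*(k) − p*(k)). Then for each t ∈ {0,…,T−1}, p*(t) is the unique maximizer of 𝟙ᵀp over the set {p ∈ ℝ^n : 0 ≤ p ≤ p̄*(t), p ≤ c(t) + w*(t) + Aᵀp}. -/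
open Matrix Finset

namespace ProrataProof


variable {n : ℕ}

/-- One-period feasible set. -/
def FeasSet (A : Matrix (Fin n) (Fin n) ℝ) (nom cw : Fin n → ℝ) : Set (Fin n → ℝ) :=
  {x | (∀ i, 0 ≤ x i) ∧ (∀ i, x i ≤ nom i) ∧ ∀ i, x i ≤ cw i + Aᵀ.mulVec x i}

/-- Greatest element of the one-period feasible set, as a componentwise sup. -/
noncomputable def maxel (A : Matrix (Fin n) (Fin n) ℝ) (nom cw : Fin n → ℝ) : Fin n → ℝ :=
  fun i => sSup ((fun x => x i) '' FeasSet A nom cw)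

lemma mulVecT_apply (A : Matrix (Fin n) (Fin n) ℝ) (x : Fin n → ℝ) (i : Fin n) :
    Aᵀ.mulVec x i = ∑ j, A j i * x j := by
  simp [Matrix.mulVec, dotProduct, Matrix.transpose_apply]

lemma mulVecT_mono {A : Matrix (Fin n) (Fin n) ℝ} (hA0 : ∀ i j, 0 ≤ A i j)
    {x y : Fin n → ℝ} (h : ∀ j, x j ≤ y j) (i : Fin n) :
    Aᵀ.mulVec x i ≤ Aᵀ.mulVec y i := by
  rw [mulVecT_apply, mulVecT_apply]
  exact Finset.sum_le_sum fun j _ => mul_le_mul_of_nonneg_left (h j) (hA0 j i)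

lemma mulVecT_nonneg {A : Matrix (Fin n) (Fin n) ℝ} (hA0 : ∀ i j, 0 ≤ A i j)
    {x : Fin n → ℝ} (h : ∀ j, 0 ≤ x j) (i : Fin n) : 0 ≤ Aᵀ.mulVec x i := by
  have h2 := mulVecT_mono hA0 h i
  have h0 : Aᵀ.mulVec (fun _ => (0:ℝ)) i = 0 := by rw [mulVecT_apply]; simp
  rw [h0] at h2; exact h2

lemma mulVecT_lin (A : Matrix (Fin n) (Fin n) ℝ) (a : ℝ) (x y : Fin n → ℝ) (i : Fin n) :
    Aᵀ.mulVec (fun j => a * x j + y j) i = a * Aᵀ.mulVec x i + Aᵀ.mulVec y i := by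
  simp only [mulVecT_apply, mul_add, Finset.sum_add_distrib, Finset.mul_sum]
  congr 1
  · exact Finset.sum_congr rfl fun j _ => by ring

lemma mulVecT_sub (A : Matrix (Fin n) (Fin n) ℝ) (x y : Fin n → ℝ) (i : Fin n) :
    Aᵀ.mulVec (fun j => x j - y j) i = Aᵀ.mulVec x i - Aᵀ.mulVec y i := by
  simp only [mulVecT_apply, mul_sub, Finset.sum_sub_distrib]

section maxel

variable {A : Matrix (Fin n) (Fin n) ℝ} {nom cw : Fin n → ℝ}

lemma zero_mem_feas (hnom : ∀ i, 0 ≤ nom i) (hcw : ∀ i, 0 ≤ cw i) : (fun _ => (0:ℝ)) ∈ FeasSet A nom cw := by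
  refine ⟨fun i => le_refl 0, fun i => hnom i, fun i => ?_⟩
  have h0 : Aᵀ.mulVec (fun _ => (0:ℝ)) i = 0 := by
    rw [mulVecT_apply]; simp
  rw [h0]; simpa using hcw i

lemma feas_nonempty_img (hnom : ∀ i, 0 ≤ nom i) (hcw : ∀ i, 0 ≤ cw i) (i : Fin n) :
    ((fun x => x i) '' FeasSet A nom cw).Nonempty :=
  ⟨0, ⟨fun _ => 0, zero_mem_feas hnom hcw, rfl⟩⟩

lemma feas_bdd_img (i : Fin n) : BddAbove ((fun x => x i) '' FeasSet A nom cw) := by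
  refine ⟨nom i, fun v hv => ?_⟩
  obtain ⟨x, hx, rfl⟩ := hv
  exact hx.2.1 i

lemma le_maxel {x : Fin n → ℝ} (hx : x ∈ FeasSet A nom cw) (i : Fin n) :
    x i ≤ maxel A nom cw i :=
  le_csSup (feas_bdd_img i) ⟨x, hx, rfl⟩

lemma maxel_mem (hA0 : ∀ i j, 0 ≤ A i j) (hnom : ∀ i, 0 ≤ nom i) (hcw : ∀ i, 0 ≤ cw i) : maxel A nom cw ∈ FeasSet A nom cw := by
  refine ⟨fun i => ?_, fun i => ?_, fun i => ?_⟩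
  · exact le_trans (le_refl 0) (le_maxel (zero_mem_feas hnom hcw) i)
  · exact csSup_le (feas_nonempty_img hnom hcw i) (fun v hv => by
      obtain ⟨x, hx, rfl⟩ := hv; exact hx.2.1 i)
  · refine csSup_le (feas_nonempty_img hnom hcw i) (fun v hv => ?_)
    obtain ⟨x, hx, rfl⟩ := hv
    have h2 := mulVecT_mono hA0 (fun j => le_maxel hx j) i
    have := hx.2.2 i
    linarith

lemma maxel_eq_min (hA0 : ∀ i j, 0 ≤ A i j) (hnom : ∀ i, 0 ≤ nom i) (hcw : ∀ i, 0 ≤ cw i) (i : Fin n) :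
    maxel A nom cw i = min (nom i) (cw i + Aᵀ.mulVec (maxel A nom cw) i) := by
  set m := maxel A nom cw with hm
  have hmem : m ∈ FeasSet A nom cw := maxel_mem hA0 hnom hcw
  have hle : ∀ j, m j ≤ min (nom j) (cw j + Aᵀ.mulVec m j) := fun j =>
    le_min (hmem.2.1 j) (hmem.2.2 j)
  have hmem' : (fun j => min (nom j) (cw j + Aᵀ.mulVec m j)) ∈ FeasSet A nom cw := by
    refine ⟨fun j => le_min (hnom j) ?_, fun j => min_le_left _ _, fun j => ?_⟩
    · exact add_nonneg (hcw j) (mulVecT_nonneg hA0 hmem.1 j)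
    · have h2 := mulVecT_mono hA0 hle j
      have h3 : min (nom j) (cw j + Aᵀ.mulVec m j) ≤ cw j + Aᵀ.mulVec m j := min_le_right _ _
      linarith
  exact le_antisymm (hle i) (le_maxel hmem' i)

end maxel

section greedy

variable (α : ℝ) (A : Matrix (Fin n) (Fin n) ℝ) (pbar : Fin n → ℝ) (c : ℕ → Fin n → ℝ)

/-- State of the greedy recursion: (remaining nominal liabilities, available cash). -/
noncomputable def gState : ℕ → (Fin n → ℝ) × (Fin n → ℝ)
  | 0 => (pbar, c 0)
  | t+1 =>
      (fun i => α * ((gState t).1 i - maxel A (gState t).1 (gState t).2 i),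
       fun i => (gState t).2 i - maxel A (gState t).1 (gState t).2 i
         + Aᵀ.mulVec (maxel A (gState t).1 (gState t).2) i + c (t+1) i)

/-- The greedy (myopically maximal) payment sequence. -/
noncomputable def greedy (t : ℕ) : Fin n → ℝ :=
  maxel A (gState α A pbar c t).1 (gState α A pbar c t).2

variable {α A pbar c}

lemma gState_succ_fst (t : ℕ) (i : Fin n) :
    (gState α A pbar c (t+1)).1 i
      = α * ((gState α A pbar c t).1 i - greedy α A pbar c t i) := rfl

lemma gState_succ_snd (t : ℕ) (i : Fin n) :
    (gState α A pbar c (t+1)).2 i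
      = (gState α A pbar c t).2 i - greedy α A pbar c t i
         + Aᵀ.mulVec (greedy α A pbar c t) i + c (t+1) i := rfl

-- sum algebra helpers
lemma pc_shift (q : ℕ → Fin n → ℝ) (t : ℕ) (i : Fin n) :
    ∑ k ∈ range (t+1), α ^ (t+1-k) * q k i
      = α * ∑ k ∈ range (t+1), α ^ (t-k) * q k i := by
  rw [Finset.mul_sum]
  refine Finset.sum_congr rfl fun k hk => ?_
  have hk' : k ≤ t := Nat.lt_succ_iff.mp (Finset.mem_range.mp hk)
  have : t + 1 - k = (t - k) + 1 := by omega
  rw [this, pow_succ]; ring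

lemma pc_succ (q : ℕ → Fin n → ℝ) (t : ℕ) (i : Fin n) :
    ∑ k ∈ range (t+2), α ^ (t+1-k) * q k i
      = α * (∑ k ∈ range (t+1), α ^ (t-k) * q k i) + q (t+1) i := by
  rw [Finset.sum_range_succ, pc_shift]
  simp

lemma pc_split (q : ℕ → Fin n → ℝ) (t : ℕ) (i : Fin n) :
    ∑ k ∈ range (t+1), α ^ (t-k) * q k i
      = (∑ k ∈ range t, α ^ (t-k) * q k i) + q t i := by
  rw [Finset.sum_range_succ]; simp

lemma nominal_sum (q : ℕ → Fin n → ℝ) (t : ℕ) (i : Fin n) :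
    ∑ k ∈ range t, α ^ (t-k) * q k i = α ^ t * pbar i - nominalVec α pbar q t i := by
  simp [nominalVec]

lemma nominal_succ (q : ℕ → Fin n → ℝ) (t : ℕ) (i : Fin n) :
    nominalVec α pbar q (t+1) i = α * (nominalVec α pbar q t i - q t i) := by
  simp only [nominalVec]
  have h1 : ∑ k ∈ range (t+1), α ^ (t+1-k) * q k i
      = α * ∑ k ∈ range (t+1), α ^ (t-k) * q k i := pc_shift q t i
  have h2 : ∑ k ∈ range (t+1), α ^ (t-k) * q k i
      = (∑ k ∈ range t, α ^ (t-k) * q k i) + q t i := pc_split q t i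
  rw [h1, h2, pow_succ]
  ring

lemma worth_succ (q : ℕ → Fin n → ℝ) (t : ℕ) (i : Fin n) :
    worthVec A c q (t+1) i
      = worthVec A c q t i + (c t i + Aᵀ.mulVec (q t) i - q t i) := by
  simp only [worthVec]
  rw [Finset.sum_range_succ, Finset.sum_range_succ]
  ring

lemma gState_fst_eq (t : ℕ) (i : Fin n) :
    (gState α A pbar c t).1 i = nominalVec α pbar (greedy α A pbar c) t i := by
  induction t with
  | zero => simp [gState, nominalVec]
  | succ t ih =>
      rw [gState_succ_fst, nominal_succ, ih]

lemma gState_snd_eq (t : ℕ) (i : Fin n) :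
    (gState α A pbar c t).2 i = c t i + worthVec A c (greedy α A pbar c) t i := by
  induction t with
  | zero => simp [gState, worthVec]
  | succ t ih =>
      rw [gState_succ_snd, worth_succ, ih]
      ring

end greedy

section withhyp

variable {T : ℕ} {α : ℝ} {A : Matrix (Fin n) (Fin n) ℝ} {pbar : Fin n → ℝ} {c : ℕ → Fin n → ℝ}

/-- compounded cumulative payments -/
noncomputable def Pc (α : ℝ) (q : ℕ → Fin n → ℝ) (t : ℕ) : Fin n → ℝ :=
  fun i => ∑ k ∈ range (t+1), α ^ (t-k) * q k i

/-- compounded cumulative external cash -/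
noncomputable def Chat (α : ℝ) (c : ℕ → Fin n → ℝ) (t : ℕ) : Fin n → ℝ :=
  fun i => ∑ k ∈ range (t+1), α ^ (t-k) * c k i

lemma Pc_zero (q : ℕ → Fin n → ℝ) (i : Fin n) : Pc α q 0 i = q 0 i := by simp [Pc]

lemma Pc_succ (q : ℕ → Fin n → ℝ) (t : ℕ) (i : Fin n) :
    Pc α q (t+1) i = α * Pc α q t i + q (t+1) i := pc_succ q t i

lemma Chat_succ (t : ℕ) (i : Fin n) :
    Chat α c (t+1) i = α * Chat α c t i + c (t+1) i := pc_succ c t i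

lemma Chat_zero (i : Fin n) : Chat α c 0 i = c 0 i := by simp [Chat]

lemma Pc_eq_nominal (q : ℕ → Fin n → ℝ) (t : ℕ) (i : Fin n) :
    Pc α q t i = (α ^ t * pbar i - nominalVec α pbar q t i) + q t i := by
  rw [Pc, pc_split, nominal_sum]

lemma nominal_pc (q : ℕ → Fin n → ℝ) (t : ℕ) (i : Fin n) :
    nominalVec α pbar q (t+1) i = α ^ (t+1) * pbar i - α * Pc α q t i := by
  rw [nominal_succ, Pc_eq_nominal (α := α) (pbar := pbar) q t i, pow_succ]
  ring

lemma greedy_good (hα : 1 ≤ α) (hA0 : ∀ i j, 0 ≤ A i j) (hpbar : ∀ i, 0 ≤ pbar i)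
    (hc : ∀ t < T, ∀ i, 0 ≤ c t i) :
    ∀ t, t < T →
      (∀ i, 0 ≤ nominalVec α pbar (greedy α A pbar c) t i) ∧
      (∀ i, 0 ≤ worthVec A c (greedy α A pbar c) t i) ∧
      (∀ i, 0 ≤ c t i + worthVec A c (greedy α A pbar c) t i) := by
  have hα0 : (0:ℝ) ≤ α := le_trans zero_le_one hα
  intro t
  induction t with
  | zero =>
      intro h0
      refine ⟨fun i => by simp [nominalVec]; exact hpbar i,
              fun i => by simp [worthVec], fun i => ?_⟩
      have := hc 0 h0 i
      simp [worthVec]; linarith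
  | succ t ih =>
      intro ht
      have htT : t < T := Nat.lt_of_succ_lt ht
      obtain ⟨h1, h2, h3⟩ := ih htT
      have hnom : ∀ i, 0 ≤ (gState α A pbar c t).1 i := fun i => by
        rw [gState_fst_eq]; exact h1 i
      have hcw : ∀ i, 0 ≤ (gState α A pbar c t).2 i := fun i => by
        rw [gState_snd_eq]; exact h3 i
      have hfe : greedy α A pbar c t ∈
          FeasSet A (gState α A pbar c t).1 (gState α A pbar c t).2 :=
        maxel_mem hA0 hnom hcw
      have hgnom : ∀ i, greedy α A pbar c t i ≤ nominalVec α pbar (greedy α A pbar c) t i :=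
        fun i => by rw [← gState_fst_eq]; exact hfe.2.1 i
      have hgflow : ∀ i, greedy α A pbar c t i
          ≤ c t i + worthVec A c (greedy α A pbar c) t i
            + Aᵀ.mulVec (greedy α A pbar c t) i := fun i => by
        have := hfe.2.2 i
        rw [gState_snd_eq] at this
        linarith
      have hworth : ∀ i, 0 ≤ worthVec A c (greedy α A pbar c) (t+1) i := fun i => by
        rw [worth_succ]
        have := hgflow i
        linarith
      refine ⟨fun i => ?_, hworth, fun i => ?_⟩
      · rw [nominal_succ]
        have := hgnom i
        have h := sub_nonneg.mpr this
        positivity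
      · have := hc (t+1) ht i
        have := hworth i
        linarith

lemma greedy_feas (hα : 1 ≤ α) (hA0 : ∀ i j, 0 ≤ A i j) (hpbar : ∀ i, 0 ≤ pbar i)
    (hc : ∀ t < T, ∀ i, 0 ≤ c t i) (t : ℕ) (ht : t < T) :
    greedy α A pbar c t ∈ FeasSet A (nominalVec α pbar (greedy α A pbar c) t)
      (fun i => c t i + worthVec A c (greedy α A pbar c) t i) := by
  obtain ⟨h1, h2, h3⟩ := greedy_good (T := T) hα hA0 hpbar hc t ht
  have hnom : ∀ i, 0 ≤ (gState α A pbar c t).1 i := fun i => by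
    rw [gState_fst_eq]; exact h1 i
  have hcw : ∀ i, 0 ≤ (gState α A pbar c t).2 i := fun i => by
    rw [gState_snd_eq]; exact h3 i
  have hfe : greedy α A pbar c t ∈
      FeasSet A (gState α A pbar c t).1 (gState α A pbar c t).2 :=
    maxel_mem hA0 hnom hcw
  refine ⟨hfe.1, fun i => ?_, fun i => ?_⟩
  · rw [← gState_fst_eq]; exact hfe.2.1 i
  · have := hfe.2.2 i
    rw [gState_snd_eq] at this
    exact this

lemma greedy_greatest (t : ℕ) {x : Fin n → ℝ}
    (hx : x ∈ FeasSet A (nominalVec α pbar (greedy α A pbar c) t)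
      (fun i => c t i + worthVec A c (greedy α A pbar c) t i)) (i : Fin n) :
    x i ≤ greedy α A pbar c t i := by
  refine le_maxel ?_ i
  refine ⟨hx.1, fun j => ?_, fun j => ?_⟩
  · rw [gState_fst_eq]; exact hx.2.1 j
  · rw [gState_snd_eq]; exact hx.2.2 j

lemma greedy_min (hα : 1 ≤ α) (hA0 : ∀ i j, 0 ≤ A i j) (hpbar : ∀ i, 0 ≤ pbar i)
    (hc : ∀ t < T, ∀ i, 0 ≤ c t i) (t : ℕ) (ht : t < T) (i : Fin n) :
    greedy α A pbar c t i = min (nominalVec α pbar (greedy α A pbar c) t i)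
      (c t i + worthVec A c (greedy α A pbar c) t i
        + Aᵀ.mulVec (greedy α A pbar c t) i) := by
  obtain ⟨h1, h2, h3⟩ := greedy_good (T := T) hα hA0 hpbar hc t ht
  have hnom : ∀ i, 0 ≤ (gState α A pbar c t).1 i := fun i => by
    rw [gState_fst_eq]; exact h1 i
  have hcw : ∀ i, 0 ≤ (gState α A pbar c t).2 i := fun i => by
    rw [gState_snd_eq]; exact h3 i
  have hfe := maxel_eq_min (A := A) hA0 hnom hcw i
  rw [gState_fst_eq, gState_snd_eq] at hfe
  calc greedy α A pbar c t i
      = maxel A (gState α A pbar c t).1 (gState α A pbar c t).2 i := rfl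
    _ = min ((nominalVec α pbar (greedy α A pbar c) t) i)
        (c t i + worthVec A c (greedy α A pbar c) t i
          + Aᵀ.mulVec (maxel A (gState α A pbar c t).1 (gState α A pbar c t).2) i) := by
        rw [hfe]
    _ = min (nominalVec α pbar (greedy α A pbar c) t i)
        (c t i + worthVec A c (greedy α A pbar c) t i
          + Aᵀ.mulVec (greedy α A pbar c t) i) := rfl

lemma greedy_admissible (hα : 1 ≤ α) (hA0 : ∀ i j, 0 ≤ A i j) (hpbar : ∀ i, 0 ≤ pbar i)
    (hc : ∀ t < T, ∀ i, 0 ≤ c t i) :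
    AdmissibleVecSeq n T α A pbar c (greedy α A pbar c) := by
  intro t ht
  have hfe := greedy_feas (T := T) hα hA0 hpbar hc t ht
  refine ⟨hfe.1, fun i => ?_, fun i => ?_⟩
  · have h := hfe.2.1 i
    have h2 := Pc_eq_nominal (α := α) (pbar := pbar) (greedy α A pbar c) t i
    show Pc α (greedy α A pbar c) t i ≤ α ^ t * pbar i
    linarith
  · have h := hfe.2.2 i
    show (0:ℝ) ≤ worthVec A c (greedy α A pbar c) (t+1) i
    rw [worth_succ]
    simp only at h
    linarith

end withhyp

section core

variable {T : ℕ} {α : ℝ} {A : Matrix (Fin n) (Fin n) ℝ} {pbar : Fin n → ℝ} {c : ℕ → Fin n → ℝ}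

/-- Abel-summation inequality: compounded payments never exceed compounded received cash. -/
lemma abel_ineq (hα : 1 ≤ α) {p : ℕ → Fin n → ℝ}
    (hadm : AdmissibleVecSeq n T α A pbar c p) :
    ∀ t, t < T → ∀ i, Pc α p t i ≤ Chat α c t i + Aᵀ.mulVec (Pc α p t) i := by
  have hα0 : (0:ℝ) ≤ α := le_trans zero_le_one hα
  have key : ∀ t, t < T → ∀ i,
      worthVec A c p (t+1) i ≤ Chat α c t i + Aᵀ.mulVec (Pc α p t) i - Pc α p t i := by
    intro t
    induction t with
    | zero =>
        intro h0 i
        have e0 : Pc α p 0 = p 0 := funext fun j => Pc_zero p j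
        rw [worth_succ, Chat_zero, e0]
        have w0 : worthVec A c p 0 i = 0 := by simp [worthVec]
        rw [w0]
        simp
    | succ t ih =>
        intro ht i
        have htT : t < T := Nat.lt_of_succ_lt ht
        have ihh := ih htT i
        have hw : 0 ≤ worthVec A c p (t+1) i := (hadm t htT).2.2 i
        have ePc : Pc α p (t+1) = fun j => α * Pc α p t j + p (t+1) j :=
          funext fun j => Pc_succ p t j
        have emul : Aᵀ.mulVec (Pc α p (t+1)) i
            = α * Aᵀ.mulVec (Pc α p t) i + Aᵀ.mulVec (p (t+1)) i := by
          rw [ePc]; exact mulVecT_lin A α (Pc α p t) (p (t+1)) i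
        rw [worth_succ, Chat_succ, emul, Pc_succ]
        have hmul : α * worthVec A c p (t+1) i
            ≤ α * (Chat α c t i + Aᵀ.mulVec (Pc α p t) i - Pc α p t i) :=
          mul_le_mul_of_nonneg_left ihh hα0
        nlinarith [hw, hα]
  intro t ht i
  have h1 := key t ht i
  have h2 : 0 ≤ worthVec A c p (t+1) i := (hadm t ht).2.2 i
  linarith

/-- Once an agent has fully paid (in compounded terms) under greedy, it stays fully paid. -/
lemma done_stays (hα : 1 ≤ α) (hA0 : ∀ i j, 0 ≤ A i j) (hpbar : ∀ i, 0 ≤ pbar i)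
    (hc : ∀ t < T, ∀ i, 0 ≤ c t i) (i : Fin n) :
    ∀ s t, s ≤ t → t < T → α ^ s * pbar i ≤ Pc α (greedy α A pbar c) s i →
      α ^ t * pbar i ≤ Pc α (greedy α A pbar c) t i := by
  have hα0 : (0:ℝ) ≤ α := le_trans zero_le_one hα
  intro s t hst htT hs
  induction t with
  | zero =>
      have : s = 0 := Nat.le_zero.mp hst
      subst this; exact hs
  | succ t ih =>
      rcases Nat.lt_or_ge s (t+1) with h | h
      · have hs' : s ≤ t := Nat.lt_succ_iff.mp h
        have ihh := ih hs' (Nat.lt_of_succ_lt htT)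
        have hg0 : 0 ≤ greedy α A pbar c (t+1) i :=
          (greedy_feas (T := T) hα hA0 hpbar hc (t+1) htT).1 i
        rw [Pc_succ, pow_succ]
        have := mul_le_mul_of_nonneg_left ihh hα0
        nlinarith
      · have : s = t + 1 := le_antisymm hst h
        subst this; exact hs

/-- An agent that is not fully paid under greedy has spent all its cash. -/
lemma flow_zero (hα : 1 ≤ α) (hA0 : ∀ i j, 0 ≤ A i j) (hpbar : ∀ i, 0 ≤ pbar i)
    (hc : ∀ t < T, ∀ i, 0 ≤ c t i) (t : ℕ) (ht : t < T) (i : Fin n)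
    (hnd : Pc α (greedy α A pbar c) t i < α ^ t * pbar i) :
    c t i + worthVec A c (greedy α A pbar c) t i
      + Aᵀ.mulVec (greedy α A pbar c t) i - greedy α A pbar c t i = 0 := by
  have hmin := greedy_min (T := T) hα hA0 hpbar hc t ht i
  rcases min_cases (nominalVec α pbar (greedy α A pbar c) t i)
      (c t i + worthVec A c (greedy α A pbar c) t i
        + Aᵀ.mulVec (greedy α A pbar c t) i) with ⟨h1, h2⟩ | ⟨h1, h2⟩
  · exfalso
    rw [h1] at hmin
    have := Pc_eq_nominal (α := α) (pbar := pbar) (greedy α A pbar c) t i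
    rw [hmin] at this
    linarith
  · rw [h1] at hmin
    linarith

/-- For an agent never fully paid under greedy up to time `t`, the compounded cash
balance is exactly zero. -/
lemma chain_zero (hα : 1 ≤ α) (hA0 : ∀ i j, 0 ≤ A i j) (hpbar : ∀ i, 0 ≤ pbar i)
    (hc : ∀ t < T, ∀ i, 0 ≤ c t i) (i : Fin n) :
    ∀ t, t < T → (∀ s, s ≤ t → Pc α (greedy α A pbar c) s i < α ^ s * pbar i) →
      (Chat α c t i + Aᵀ.mulVec (Pc α (greedy α A pbar c) t) i
          - Pc α (greedy α A pbar c) t i = 0) ∧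
        worthVec A c (greedy α A pbar c) (t+1) i = 0 := by
  intro t
  induction t with
  | zero =>
      intro h0 hnd
      have fz := flow_zero (T := T) hα hA0 hpbar hc 0 h0 i (hnd 0 le_rfl)
      have w0 : worthVec A c (greedy α A pbar c) 0 i = 0 := by simp [worthVec]
      have e0 : Pc α (greedy α A pbar c) 0 = greedy α A pbar c 0 :=
        funext fun j => Pc_zero _ j
      constructor
      · rw [Chat_zero, e0]
        rw [w0] at fz
        linarith
      · rw [worth_succ, w0]
        linarith
  | succ t ih =>
      intro ht hnd
      have htT : t < T := Nat.lt_of_succ_lt ht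
      obtain ⟨ihE, ihW⟩ := ih htT (fun s hs => hnd s (Nat.le_succ_of_le hs))
      have fz := flow_zero (T := T) hα hA0 hpbar hc (t+1) ht i (hnd (t+1) le_rfl)
      rw [ihW] at fz
      have ePc : Pc α (greedy α A pbar c) (t+1) = fun j =>
          α * Pc α (greedy α A pbar c) t j + greedy α A pbar c (t+1) j :=
        funext fun j => Pc_succ _ t j
      have emul : Aᵀ.mulVec (Pc α (greedy α A pbar c) (t+1)) i
          = α * Aᵀ.mulVec (Pc α (greedy α A pbar c) t) i
            + Aᵀ.mulVec (greedy α A pbar c (t+1)) i := by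
        rw [ePc]; exact mulVecT_lin A α _ _ i
      constructor
      · rw [Chat_succ, emul, Pc_succ]
        nlinarith [ihE, fz]
      · rw [worth_succ, ihW]
        linarith

/-- Main dominance lemma: greedy dominates every admissible sequence in
compounded cumulative payments. -/
lemma greedy_dominates (hα : 1 ≤ α) (hA0 : ∀ i j, 0 ≤ A i j) (hpbar : ∀ i, 0 ≤ pbar i)
    (hc : ∀ t < T, ∀ i, 0 ≤ c t i) {p : ℕ → Fin n → ℝ}
    (hadm : AdmissibleVecSeq n T α A pbar c p) :
    ∀ t, t < T → ∀ i, Pc α p t i ≤ Pc α (greedy α A pbar c) t i := by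
  have hα0 : (0:ℝ) < α := lt_of_lt_of_le zero_lt_one hα
  intro t
  induction t with
  | zero =>
      intro h0 i
      have hfeas : p 0 ∈ FeasSet A (nominalVec α pbar (greedy α A pbar c) 0)
          (fun j => c 0 j + worthVec A c (greedy α A pbar c) 0 j) := by
        refine ⟨(hadm 0 h0).1, fun j => ?_, fun j => ?_⟩
        · have := (hadm 0 h0).2.1 j
          simp only [nominalVec]
          simp only [Finset.range_zero, Finset.sum_empty]
          have h2 : (∑ k ∈ range 1, α ^ (0-k) * p k j) = p 0 j := by simp
          rw [h2] at this
          linarith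
        · have := (hadm 0 h0).2.2 j
          have w0 : worthVec A c (greedy α A pbar c) 0 j = 0 := by simp [worthVec]
          show p 0 j ≤ c 0 j + worthVec A c (greedy α A pbar c) 0 j + Aᵀ.mulVec (p 0) j
          rw [w0]
          have h2 : (∑ k ∈ range 1, c k j)
              + ∑ k ∈ range 1, (Aᵀ.mulVec (p k) j - p k j)
              = c 0 j + (Aᵀ.mulVec (p 0) j - p 0 j) := by simp
          rw [h2] at this
          linarith
      have := greedy_greatest 0 hfeas i
      rw [Pc_zero, Pc_zero]
      exact this
  | succ t ih =>
      intro ht i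
      have htT : t < T := Nat.lt_of_succ_lt ht
      have ihh := ih htT
      set g := greedy α A pbar c with hgdef
      set y : Fin n → ℝ := fun j => max (Pc α p (t+1) j - α * Pc α g t j) 0 with hy
      have hy0 : ∀ j, 0 ≤ y j := fun j => le_max_right _ _
      have hyge : ∀ j, Pc α p (t+1) j - α * Pc α g t j ≤ y j := fun j => le_max_left _ _
      have hynom : ∀ j, y j ≤ nominalVec α pbar g (t+1) j := by
        intro j
        refine max_le ?_ ((greedy_good (T := T) hα hA0 hpbar hc (t+1) ht).1 j)
        rw [nominal_pc]
        have := (hadm (t+1) ht).2.1 j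
        have hPc : Pc α p (t+1) j ≤ α ^ (t+1) * pbar j := this
        linarith
      have hyflow : ∀ j, y j ≤ c (t+1) j + worthVec A c g (t+1) j + Aᵀ.mulVec y j := by
        intro j
        have hwg : 0 ≤ worthVec A c g (t+1) j :=
          (greedy_good (T := T) hα hA0 hpbar hc (t+1) ht).2.1 j
        rcases le_or_gt (Pc α p (t+1) j - α * Pc α g t j) 0 with hneg | hpos
        · have hyj : y j = 0 := max_eq_right hneg
          rw [hyj]
          have h1 : 0 ≤ c (t+1) j + worthVec A c g (t+1) j :=
            (greedy_good (T := T) hα hA0 hpbar hc (t+1) ht).2.2 j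
          have h2 : 0 ≤ Aᵀ.mulVec y j := mulVecT_nonneg hA0 hy0 j
          linarith
        · have hyj : y j = Pc α p (t+1) j - α * Pc α g t j := max_eq_left (le_of_lt hpos)
          -- agent j is never fully paid under greedy up to time t
          have hndt : Pc α g t j < α ^ t * pbar j := by
            have hb : Pc α p (t+1) j ≤ α ^ (t+1) * pbar j := (hadm (t+1) ht).2.1 j
            have : α * Pc α g t j < α ^ (t+1) * pbar j := by
              calc α * Pc α g t j < Pc α p (t+1) j := by linarith
                _ ≤ α ^ (t+1) * pbar j := hb
            rw [pow_succ] at this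
            nlinarith
          have hndall : ∀ s, s ≤ t → Pc α g s j < α ^ s * pbar j := by
            intro s hs
            by_contra hcon
            push_neg at hcon
            have := done_stays (T := T) hα hA0 hpbar hc j s t hs htT hcon
            linarith
          obtain ⟨hE, _⟩ := chain_zero (T := T) hα hA0 hpbar hc j t htT hndall
          have habel := abel_ineq (T := T) hα hadm (t+1) ht j
          have hChat : Chat α c (t+1) j = α * Chat α c t j + c (t+1) j := Chat_succ t j
          -- d := Pc p (t+1) - α • Pc g t  satisfies d ≤ y
          have hdmul : Aᵀ.mulVec (fun k => Pc α p (t+1) k - α * Pc α g t k) j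
              = Aᵀ.mulVec (Pc α p (t+1)) j - α * Aᵀ.mulVec (Pc α g t) j := by
            have e : (fun k => Pc α p (t+1) k - α * Pc α g t k)
                = fun k => (-α) * Pc α g t k + Pc α p (t+1) k := by
              funext k; ring
            rw [e, mulVecT_lin]
            ring
          have hdy := mulVecT_mono hA0 hyge j
          rw [hdmul] at hdy
          have hAy : Aᵀ.mulVec (Pc α p (t+1)) j - α * Aᵀ.mulVec (Pc α g t) j
              ≤ Aᵀ.mulVec y j := hdy
          rw [hyj]
          nlinarith [habel, hE, hChat, hAy, hwg]
      have hfeas : y ∈ FeasSet A (nominalVec α pbar g (t+1))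
          (fun j => c (t+1) j + worthVec A c g (t+1) j) := ⟨hy0, hynom, hyflow⟩
      have hyle := greedy_greatest (t+1) hfeas i
      have := hyge i
      rw [Pc_succ, Pc_succ]
      have hmono : α * Pc α p t i ≤ α * Pc α g t i :=
        mul_le_mul_of_nonneg_left (ihh i) (le_of_lt hα0)
      -- Pc p (t+1) i ≤ α Pc g t i + y i ≤ α Pc g t i + g (t+1) i
      have h1 : Pc α p (t+1) i ≤ α * Pc α g t i + g (t+1) i := by
        have := hyge i
        linarith [hyle]
      rw [Pc_succ] at h1
      linarith [h1]

lemma swap_tri (f : ℕ → ℕ → ℝ) :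
    ∀ T : ℕ, ∑ s ∈ range T, ∑ k ∈ range (s+1), f s k
      = ∑ k ∈ range T, ∑ s ∈ Ico k T, f s k := by
  intro T
  induction T with
  | zero => simp
  | succ T ih =>
      rw [Finset.sum_range_succ, ih]
      have h1 : ∀ k ∈ range (T+1), ∑ s ∈ Ico k (T+1), f s k
          = (∑ s ∈ Ico k T, f s k) + f T k := by
        intro k hk
        have hkT : k ≤ T := Nat.lt_succ_iff.mp (Finset.mem_range.mp hk)
        rw [Finset.sum_Ico_succ_top hkT]
      rw [Finset.sum_congr rfl h1, Finset.sum_add_distrib, Finset.sum_range_succ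
        (fun k => ∑ s ∈ Ico k T, f s k)]
      simp

lemma obj_eq {T : ℕ} {α : ℝ} (q : ℕ → Fin n → ℝ) :
    objVecSeq n T (coeff T α) q = ∑ s ∈ range T, ∑ i, Pc α q s i := by
  have h1 : ∀ s : ℕ, ∑ i, Pc α q s i
      = ∑ k ∈ range (s+1), α ^ (s-k) * ∑ i, q k i := by
    intro s
    rw [show (∑ i, Pc α q s i) = ∑ i, ∑ k ∈ range (s+1), α ^ (s-k) * q k i from rfl,
      Finset.sum_comm]
    exact Finset.sum_congr rfl fun k _ => by rw [Finset.mul_sum]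
  calc objVecSeq n T (coeff T α) q
      = ∑ k ∈ range T, coeff T α k * ∑ i, q k i := rfl
    _ = ∑ k ∈ range T, ∑ s ∈ Ico k T, α ^ (s-k) * ∑ i, q k i := by
        refine Finset.sum_congr rfl fun k _ => ?_
        rw [Finset.sum_Ico_eq_sum_range]
        have : ∀ j ∈ range (T - k), α ^ (k + j - k) * ∑ i, q k i
            = α ^ j * ∑ i, q k i := by
          intro j _
          congr 2
          omega
        rw [Finset.sum_congr rfl this, ← Finset.sum_mul, coeff]
    _ = ∑ s ∈ range T, ∑ k ∈ range (s+1), α ^ (s-k) * ∑ i, q k i := by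
        rw [swap_tri (fun s k => α ^ (s-k) * ∑ i, q k i) T]
    _ = ∑ s ∈ range T, ∑ i, Pc α q s i := by
        exact Finset.sum_congr rfl fun s _ => (h1 s).symm

end core

end ProrataProof

/-- In the pro-rata dynamic model, the optimal sequence `[p*]` decouples in time: at every
period `t < T`, `p*(t)` is the unique maximizer of `𝟙ᵀp` over
`{p : 0 ≤ p ≤ p̄*(t), p ≤ c(t) + w*(t) + Aᵀp}`. -/
theorem prorata_dynamic_decoupling (n T : ℕ) (hn : 1 ≤ n) (hT : 1 ≤ T)
    (α : ℝ) (hα : 1 ≤ α)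
    (A : Matrix (Fin n) (Fin n) ℝ) (hA0 : ∀ i j, 0 ≤ A i j) (hA1 : ∀ i, ∑ j, A i j = 1)
    (pbar : Fin n → ℝ) (hpbar : ∀ i, 0 ≤ pbar i)
    (c : ℕ → Fin n → ℝ) (hc : ∀ t < T, ∀ i, 0 ≤ c t i)
    (pstar : ℕ → Fin n → ℝ)
    (hadm : AdmissibleVecSeq n T α A pbar c pstar)
    (hopt : ∀ q, AdmissibleVecSeq n T α A pbar c q →
      objVecSeq n T (coeff T α) q ≤ objVecSeq n T (coeff T α) pstar) :
    ∀ t < T,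
      ((∀ i, 0 ≤ pstar t i) ∧ (∀ i, pstar t i ≤ nominalVec α pbar pstar t i) ∧
        (∀ i, pstar t i ≤ c t i + worthVec A c pstar t i + Aᵀ.mulVec (pstar t) i)) ∧
      (∀ q : Fin n → ℝ,
        (∀ i, 0 ≤ q i) → (∀ i, q i ≤ nominalVec α pbar pstar t i) →
        (∀ i, q i ≤ c t i + worthVec A c pstar t i + Aᵀ.mulVec q i) →
        ∑ i, q i ≤ ∑ i, pstar t i) ∧
      (∀ q : Fin n → ℝ,
        (∀ i, 0 ≤ q i) → (∀ i, q i ≤ nominalVec α pbar pstar t i) →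
        (∀ i, q i ≤ c t i + worthVec A c pstar t i + Aᵀ.mulVec q i) →
        (∀ r : Fin n → ℝ,
          (∀ i, 0 ≤ r i) → (∀ i, r i ≤ nominalVec α pbar pstar t i) →
          (∀ i, r i ≤ c t i + worthVec A c pstar t i + Aᵀ.mulVec r i) →
          ∑ i, r i ≤ ∑ i, q i) →
        q = pstar t) := by
  classical
  open ProrataProof in
  set g := ProrataProof.greedy α A pbar c with hgdef
  have hgadm : AdmissibleVecSeq n T α A pbar c g :=
    ProrataProof.greedy_admissible (T := T) hα hA0 hpbar hc
  have hdom : ∀ s, s < T → ∀ i, ProrataProof.Pc α pstar s i ≤ ProrataProof.Pc α g s i :=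
    ProrataProof.greedy_dominates (T := T) hα hA0 hpbar hc hadm
  have hobj : objVecSeq n T (coeff T α) g ≤ objVecSeq n T (coeff T α) pstar :=
    hopt g hgadm
  have ho1 : objVecSeq n T (coeff T α) g = ∑ s ∈ Finset.range T, ∑ i, ProrataProof.Pc α g s i :=
    ProrataProof.obj_eq g
  have ho2 : objVecSeq n T (coeff T α) pstar
      = ∑ s ∈ Finset.range T, ∑ i, ProrataProof.Pc α pstar s i :=
    ProrataProof.obj_eq pstar
  -- from dominance and optimality, the compounded payments agree
  have hle2 : ∀ s ∈ Finset.range T, ∑ i, ProrataProof.Pc α pstar s i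
      ≤ ∑ i, ProrataProof.Pc α g s i := fun s hs =>
    Finset.sum_le_sum fun i _ => hdom s (Finset.mem_range.mp hs) i
  have heqsum : ∑ s ∈ Finset.range T, ∑ i, ProrataProof.Pc α pstar s i
      = ∑ s ∈ Finset.range T, ∑ i, ProrataProof.Pc α g s i := by
    refine le_antisymm (Finset.sum_le_sum hle2) ?_
    rw [← ho1, ← ho2]; exact hobj
  have hPceq : ∀ s, s < T → ∀ i, ProrataProof.Pc α pstar s i = ProrataProof.Pc α g s i := by
    intro s hs i
    have h1 := (Finset.sum_eq_sum_iff_of_le hle2).mp heqsum s (Finset.mem_range.mpr hs)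
    have h2 : ∀ j ∈ (Finset.univ : Finset (Fin n)),
        ProrataProof.Pc α pstar s j ≤ ProrataProof.Pc α g s j :=
      fun j _ => hdom s hs j
    exact (Finset.sum_eq_sum_iff_of_le h2).mp h1 i (Finset.mem_univ i)
  have hpeq : ∀ t, t < T → pstar t = g t := by
    intro t ht
    funext i
    cases t with
    | zero =>
        have := hPceq 0 ht i
        rwa [ProrataProof.Pc_zero, ProrataProof.Pc_zero] at this
    | succ s =>
        have h1 := hPceq (s+1) ht i
        have h2 := hPceq s (Nat.lt_of_succ_lt ht) i
        have e1 := ProrataProof.Pc_succ (α := α) pstar s i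
        have e2 := ProrataProof.Pc_succ (α := α) g s i
        rw [e1, e2, h2] at h1
        linarith
  intro t ht
  have hnomEq : nominalVec α pbar pstar t = nominalVec α pbar g t := by
    funext i
    simp only [nominalVec]
    congr 1
    refine Finset.sum_congr rfl fun k hk => ?_
    rw [hpeq k (lt_trans (Finset.mem_range.mp hk) ht)]
  have hworthEq : worthVec A c pstar t = worthVec A c g t := by
    funext i
    simp only [worthVec]
    congr 1
    refine Finset.sum_congr rfl fun k hk => ?_
    rw [hpeq k (lt_trans (Finset.mem_range.mp hk) ht)]
  have hpt : pstar t = g t := hpeq t ht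
  have hfe := ProrataProof.greedy_feas (T := T) hα hA0 hpbar hc t ht
  have bullet1 : (∀ i, 0 ≤ pstar t i) ∧ (∀ i, pstar t i ≤ nominalVec α pbar pstar t i) ∧
      (∀ i, pstar t i ≤ c t i + worthVec A c pstar t i + Aᵀ.mulVec (pstar t) i) := by
    refine ⟨fun i => ?_, fun i => ?_, fun i => ?_⟩
    · rw [hpt]; exact hfe.1 i
    · rw [hpt, hnomEq]; exact hfe.2.1 i
    · rw [hpt, hworthEq]; exact hfe.2.2 i
  have feas_trans : ∀ q : Fin n → ℝ,
      (∀ i, 0 ≤ q i) → (∀ i, q i ≤ nominalVec α pbar pstar t i) →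
      (∀ i, q i ≤ c t i + worthVec A c pstar t i + Aᵀ.mulVec q i) →
      ∀ i, q i ≤ pstar t i := by
    intro q hq0 hqnom hqflow i
    rw [hpt]
    refine ProrataProof.greedy_greatest t ⟨hq0, fun j => ?_, fun j => ?_⟩ i
    · rw [← hnomEq]; exact hqnom j
    · have := hqflow j
      rw [hworthEq] at this
      exact this
  refine ⟨bullet1, fun q hq0 hqnom hqflow => ?_, fun q hq0 hqnom hqflow hmax => ?_⟩
  · exact Finset.sum_le_sum fun i _ => feas_trans q hq0 hqnom hqflow i
  · have hqle := feas_trans q hq0 hqnom hqflow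
    have hsumge : ∑ i, pstar t i ≤ ∑ i, q i :=
      hmax (pstar t) bullet1.1 bullet1.2.1 bullet1.2.2
    have hzero : ∀ i ∈ (Finset.univ : Finset (Fin n)), pstar t i - q i = 0 := by
      have hnn : ∀ i ∈ (Finset.univ : Finset (Fin n)), 0 ≤ pstar t i - q i :=
        fun i _ => sub_nonneg.mpr (hqle i)
      have hs0 : ∑ i, (pstar t i - q i) = 0 := by
        have h1 : ∑ i, (pstar t i - q i) ≤ 0 := by
          rw [Finset.sum_sub_distrib]
          linarith
        have h2 : 0 ≤ ∑ i, (pstar t i - q i) := Finset.sum_nonneg hnn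
        linarith
      exact (Finset.sum_eq_zero_iff_of_nonneg hnn).mp hs0
    funext i
    have := hzero i (Finset.mem_univ i)
    linarith
end

section
/- Under the pro-rata dynamic model, let [p*] be the unique maximizer of ∑_{t=0}^{T−1} a_t 𝟙ᵀp(t) over all admissible sequences, where a_t = ∑_{j=0}^{T−t−1} α^j, and define p̄*(0) = p̄, w*(0) = 0, and for t ≥ 1: p̄*(t) = α^t p̄ − ∑_{k=0}^{t−1} α^{t−k} p*(k) and w*(t) = C(t−1) + ∑_{k=0}^{t−1}(Aᵀp*(k) − p*(k)). Then for each t ∈ {0,…,T−1}, p*(t) ≥ 0 satisfies the absolute priority fixed-point equation p*(t) = min(p̄*(t), c(t) + w*(t) + Aᵀp*(t)) (componentwise minimum). -/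
open Matrix Finset

/-!
Splitting off period 0 turns an admissible sequence for horizon `T + 1` into a first payment `x`
and an admissible sequence for a residual problem of horizon `T` (liabilities `α (p̄ - x)`, the
period-0 surplus carried into period 1), and the objective splits as `a₀ 𝟙ᵀx` plus the residual
objective. So the tail of an optimal sequence is optimal for the residual problem, and by induction
on `T` it suffices to show that an optimal `p` pays `p(0) = min(p̄, c(0) + Aᵀp(0))`.

Admissibility gives `p(0) ≤ min(p̄, c(0) + Aᵀp(0))`. If this were strict somewhere, Tarski's
theorem would give a clearing vector `x ≥ p(0)`, `x ≠ p(0)`. Paying `x` instead is a prepayment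
`Δ = x - p(0)`: later liabilities drop by `αΔ`, and only nodes that paid out more than they received
lose cash. Period by period, the old continuation is cut by an amount `d ≤ αΔ`, again a Tarski fixed
point, small enough that no cash balance turns negative, and `αΔ - d` is carried forward. This costs
at most `α a₁ 𝟙ᵀΔ`, and since `a₀ = 1 + α a₁` the new sequence beats `p` by `𝟙ᵀΔ > 0`.
-/

theorem exists_eq_max_min {ι β : Type*} [ConditionallyCompleteLinearOrder β] {L U : ι → β}
    (hLU : L ≤ U) {g : (ι → β) → ι → β} (hg : Monotone g) :
    ∃ d ∈ Set.Icc L U, ∀ j, d j = max (L j) (min (U j) (g d j)) := by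
  have := Fact.mk hLU
  let F : Set.Icc L U →o Set.Icc L U :=
    ⟨fun d => ⟨fun j => max (L j) (min (U j) (g d j)),
      fun j => le_max_left _ _, fun j => max_le (hLU j) (min_le_left _ _)⟩,
     fun d d' h j => max_le_max le_rfl (min_le_min le_rfl (hg h j))⟩
  exact ⟨_, (OrderHom.lfp F).2,
    fun j => (congrFun (congrArg Subtype.val (OrderHom.map_lfp F)) j).symm⟩

theorem Matrix.mulVec_mono {ι κ R : Type*} [Fintype κ] [Semiring R] [PartialOrder R]
    [IsOrderedRing R] {M : Matrix ι κ R} (hM : ∀ i j, 0 ≤ M i j) : Monotone M.mulVec :=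
  fun _ _ hxy i => Finset.sum_le_sum fun j _ => mul_le_mul_of_nonneg_left (hxy j) (hM i j)

theorem Matrix.mulVec_nonneg {ι κ R : Type*} [Fintype κ] [Semiring R] [PartialOrder R]
    [IsOrderedRing R] {M : Matrix ι κ R} (hM : ∀ i j, 0 ≤ M i j) {x : κ → R} (hx : 0 ≤ x) :
    0 ≤ M *ᵥ x := by
  simpa using Matrix.mulVec_mono hM hx

namespace Prorata

def cons {β : Type*} (x : β) (q : ℕ → β) : ℕ → β
  | 0 => x
  | t + 1 => q t

@[simp] theorem cons_zero {β : Type*} (x : β) (q : ℕ → β) : cons x q 0 = x := rfl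

@[simp] theorem cons_succ {β : Type*} (x : β) (q : ℕ → β) (t : ℕ) : cons x q (t + 1) = q t := rfl

theorem cons_head_tail {β : Type*} (p : ℕ → β) : cons (p 0) (fun t => p (t + 1)) = p := by
  funext t; cases t <;> rfl

variable {n : ℕ} {α : ℝ} {A : Matrix (Fin n) (Fin n) ℝ}

/-- The problem left after paying `x` in period 0, re-indexed to start at period 1: unpaid
liabilities accrue one period of interest, and the period-0 surplus is carried over. -/
def residualLiab (α : ℝ) (pbar x : Fin n → ℝ) : Fin n → ℝ := α • (pbar - x)

def residualCash (A : Matrix (Fin n) (Fin n) ℝ) (c : ℕ → Fin n → ℝ) (x : Fin n → ℝ) :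
    ℕ → Fin n → ℝ :=
  cons (c 1 + (c 0 + Aᵀ *ᵥ x - x)) (fun t => c (t + 2))

theorem residualCash_nonneg {T : ℕ} {c : ℕ → Fin n → ℝ} (hc : ∀ t < T + 1, 0 ≤ c t)
    {x : Fin n → ℝ} (hx : x ≤ c 0 + Aᵀ *ᵥ x) : ∀ t < T, 0 ≤ residualCash A c x t
  | 0, hT => add_nonneg (hc 1 (by omega)) (sub_nonneg.2 hx)
  | t + 1, ht => hc (t + 2) (by omega)

theorem sum_pow_mul_cons (x : Fin n → ℝ) (q : ℕ → Fin n → ℝ) (t : ℕ) (i : Fin n) :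
    ∑ k ∈ range (t + 2), α ^ (t + 1 - k) * cons x q k i
      = α ^ (t + 1) * x i + ∑ k ∈ range (t + 1), α ^ (t - k) * q k i := by
  rw [sum_range_succ']
  simp only [cons_succ, cons_zero, Nat.add_sub_add_right, Nat.sub_zero]
  ring

theorem sum_cash_cons (c : ℕ → Fin n → ℝ) (x : Fin n → ℝ) (q : ℕ → Fin n → ℝ) (t : ℕ)
    (i : Fin n) :
    (∑ k ∈ range (t + 2), c k i) + ∑ k ∈ range (t + 2), ((Aᵀ *ᵥ cons x q k) i - cons x q k i)
      = (∑ k ∈ range (t + 1), residualCash A c x k i)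
        + ∑ k ∈ range (t + 1), ((Aᵀ *ᵥ q k) i - q k i) := by
  rw [sum_range_succ' (fun k => c k i), sum_range_succ' (fun k => c (k + 1) i),
    sum_range_succ' (fun k => residualCash A c x k i),
    sum_range_succ' (fun k => (Aᵀ *ᵥ cons x q k) i - cons x q k i)]
  simp only [residualCash, cons_succ, cons_zero, Pi.add_apply, Pi.sub_apply]
  ring

theorem admissibleVecSeq_cons_iff {T : ℕ} {pbar x : Fin n → ℝ} {c q : ℕ → Fin n → ℝ} :
    AdmissibleVecSeq n (T + 1) α A pbar c (cons x q) ↔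
      (0 ≤ x ∧ x ≤ pbar ∧ x ≤ c 0 + Aᵀ *ᵥ x) ∧
        AdmissibleVecSeq n T α A (residualLiab α pbar x) (residualCash A c x) q := by
  unfold AdmissibleVecSeq
  rw [Nat.forall_lt_succ_left]
  refine and_congr ?_ (forall₂_congr fun t _ => and_congr Iff.rfl (and_congr ?_ ?_))
  · simp only [zero_add, sum_range_one, Nat.sub_self, pow_zero, one_mul, cons_zero]
    refine and_congr Pi.le_def.symm (and_congr Pi.le_def.symm
      (Pi.le_def.trans (forall_congr' fun i => ?_)).symm)
    simp only [Pi.add_apply]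
    constructor <;> intro h <;> linarith
  · refine forall_congr' fun i => ?_
    rw [sum_pow_mul_cons, residualLiab, Pi.smul_apply, Pi.sub_apply, smul_eq_mul, pow_succ]
    constructor <;> intro h <;> linarith
  · refine forall_congr' fun i => ?_
    rw [sum_cash_cons]

theorem admissibleVecSeq_succ_iff {T : ℕ} {pbar : Fin n → ℝ} {c p : ℕ → Fin n → ℝ} :
    AdmissibleVecSeq n (T + 1) α A pbar c p ↔
      (0 ≤ p 0 ∧ p 0 ≤ pbar ∧ p 0 ≤ c 0 + Aᵀ *ᵥ p 0) ∧
        AdmissibleVecSeq n T α A (residualLiab α pbar (p 0)) (residualCash A c (p 0))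
          (fun t => p (t + 1)) := by
  conv_lhs => rw [← cons_head_tail p]
  exact admissibleVecSeq_cons_iff

theorem coeff_succ_zero (T : ℕ) (α : ℝ) : coeff (T + 1) α 0 = 1 + α * coeff T α 0 := by
  simp only [coeff, Nat.sub_zero, sum_range_succ' _ T, pow_succ', ← mul_sum, pow_zero, add_comm]

theorem objVecSeq_succ (T : ℕ) (p : ℕ → Fin n → ℝ) :
    objVecSeq n (T + 1) (coeff (T + 1) α) p
      = coeff (T + 1) α 0 * ∑ i, p 0 i + objVecSeq n T (coeff T α) (fun t => p (t + 1)) := by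
  simp only [objVecSeq, sum_range_succ' _ T, coeff, Nat.add_sub_add_right]
  ring

def IsOptimal (α : ℝ) (A : Matrix (Fin n) (Fin n) ℝ) (T : ℕ) (pbar : Fin n → ℝ)
    (c p : ℕ → Fin n → ℝ) : Prop :=
  AdmissibleVecSeq n T α A pbar c p ∧
    ∀ q, AdmissibleVecSeq n T α A pbar c q →
      objVecSeq n T (coeff T α) q ≤ objVecSeq n T (coeff T α) p

theorem IsOptimal.tail {T : ℕ} {pbar : Fin n → ℝ} {c p : ℕ → Fin n → ℝ}
    (hp : IsOptimal α A (T + 1) pbar c p) :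
    IsOptimal α A T (residualLiab α pbar (p 0)) (residualCash A c (p 0)) (fun t => p (t + 1)) := by
  obtain ⟨hp₀, hadm⟩ := admissibleVecSeq_succ_iff.1 hp.1
  refine ⟨hadm, fun q hq => ?_⟩
  have := hp.2 _ (admissibleVecSeq_cons_iff.2 ⟨hp₀, hq⟩)
  rw [objVecSeq_succ, objVecSeq_succ T p] at this
  simpa using this

/-- `Δ` was paid in addition in the previous period, so the liabilities `pbar` drop by `α • Δ` and
the period-0 cash changes from `c₀` to `c₀'`. A node not settled by it must have been a net payer,
and its cash falls by at most its net outflow. -/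
def IsPrepayment (α : ℝ) (A : Matrix (Fin n) (Fin n) ℝ) (pbar c₀ c₀' Δ : Fin n → ℝ) : Prop :=
  0 ≤ Δ ∧ α • Δ ≤ pbar ∧
    ∀ j, α * Δ j < pbar j → (Aᵀ *ᵥ Δ) j ≤ Δ j ∧ c₀ j ≤ c₀' j + (Δ j - (Aᵀ *ᵥ Δ) j)

theorem IsPrepayment.residual (hα : 1 ≤ α) {pbar r₀ Δ d : Fin n → ℝ} {c c' : ℕ → Fin n → ℝ}
    (hΔ : IsPrepayment α A pbar (c 0) (c' 0) Δ) (hc₁ : c' 1 = c 1) (hdr : d ≤ r₀)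
    (hdL : r₀ - d ≤ pbar - α • Δ) (hdΔ : d ≤ α • Δ)
    (hsave : ∀ j, r₀ j + α * Δ j - pbar j < d j →
      d j ≤ α * (Δ j - (Aᵀ *ᵥ Δ) j) + (Aᵀ *ᵥ d) j) :
    IsPrepayment α A (residualLiab α pbar r₀) (residualCash A c r₀ 0)
      (residualCash A c' (r₀ - d) 0) (α • Δ - d) := by
  have hα₀ : 0 < α := by linarith
  refine ⟨fun j => sub_nonneg.2 (hdΔ j), fun j => ?_, fun j hj => ?_⟩
  · have := hdL j
    simp only [residualLiab, Pi.smul_apply, Pi.sub_apply, smul_eq_mul] at this ⊢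
    exact mul_le_mul_of_nonneg_left (by linarith) hα₀.le
  · simp only [residualLiab, residualCash, cons_zero, hc₁, Pi.smul_apply, Pi.sub_apply,
      Pi.add_apply, smul_eq_mul, mulVec_sub, mulVec_smul] at hj ⊢
    have hj' : α * Δ j - d j < pbar j - r₀ j := lt_of_mul_lt_mul_left hj hα₀.le
    obtain ⟨hout, hcash⟩ := hΔ.2.2 j (by linarith [hdr j])
    have hscale : Δ j - (Aᵀ *ᵥ Δ) j ≤ α * (Δ j - (Aᵀ *ᵥ Δ) j) :=
      le_mul_of_one_le_left (sub_nonneg.2 hout) hα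
    have := hsave j (by linarith)
    constructor <;> linarith

theorem exists_payment_reduction (hα : 1 ≤ α) (hA : ∀ i j, 0 ≤ A i j)
    {pbar r₀ Δ c₀ c₀' : Fin n → ℝ} (hr₀ : 0 ≤ r₀) (hr₀p : r₀ ≤ pbar)
    (hr₀c : r₀ ≤ c₀ + Aᵀ *ᵥ r₀) (hc₀' : 0 ≤ c₀') (hΔ : IsPrepayment α A pbar c₀ c₀' Δ) :
    ∃ d, d ≤ r₀ ∧ r₀ - d ≤ pbar - α • Δ ∧ d ≤ α • Δ ∧ r₀ - d ≤ c₀' + Aᵀ *ᵥ (r₀ - d) ∧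
      ∀ j, r₀ j + α * Δ j - pbar j < d j →
        d j ≤ α * (Δ j - (Aᵀ *ᵥ Δ) j) + (Aᵀ *ᵥ d) j := by
  obtain ⟨hΔ₀, hΔp, hΔout⟩ := hΔ
  replace hΔp : ∀ j, α * Δ j ≤ pbar j := hΔp
  replace hc₀' : ∀ j, 0 ≤ c₀' j := hc₀'
  replace hr₀c : ∀ j, r₀ j ≤ c₀ j + (Aᵀ *ᵥ r₀) j := hr₀c
  have hA' : ∀ i j, 0 ≤ Aᵀ i j := fun i j => hA j i
  -- An unsettled node is cut by at most its prepaid net outflow plus the receipts it loses, so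
  -- that its cash stays non-negative and the remainder `α • Δ - d` is again a prepayment.
  obtain ⟨d, ⟨hLd, hdU⟩, hd⟩ := exists_eq_max_min
    (L := fun j => max 0 (r₀ j + α * Δ j - pbar j)) (U := fun j => min (r₀ j) (α * Δ j))
    (g := fun d j => α * (Δ j - (Aᵀ *ᵥ Δ) j) + (Aᵀ *ᵥ d) j)
    (fun j => max_le (le_min (hr₀ j) (mul_nonneg (by linarith) (hΔ₀ j)))
      (le_min (by linarith [hΔp j]) (by linarith [hr₀p j])))
    (fun d d' h j => by dsimp only; gcongr; exact mulVec_mono hA' h j)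
  have hd₀ (j) : 0 ≤ d j := (le_max_left _ _).trans (hLd j)
  have hdL (j) : r₀ j + α * Δ j - pbar j ≤ d j := (le_max_right _ _).trans (hLd j)
  have hdr (j) : d j ≤ r₀ j := (hdU j).trans (min_le_left _ _)
  have hdΔ : d ≤ α • Δ := fun j => (hdU j).trans (min_le_right _ _)
  have hAd (j) : (Aᵀ *ᵥ d) j ≤ α * (Aᵀ *ᵥ Δ) j := by
    simpa [mulVec_smul] using mulVec_mono hA' hdΔ j
  have hscale (j) (hout : (Aᵀ *ᵥ Δ) j ≤ Δ j) :
      Δ j - (Aᵀ *ᵥ Δ) j ≤ α * (Δ j - (Aᵀ *ᵥ Δ) j) :=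
    le_mul_of_one_le_left (sub_nonneg.2 hout) hα
  refine ⟨d, hdr, fun j => ?_, hdΔ, fun j => ?_, fun j hj => ?_⟩
  · simp only [Pi.sub_apply, Pi.smul_apply, smul_eq_mul]
    linarith [hdL j]
  · have hA_gap : 0 ≤ (Aᵀ *ᵥ (r₀ - d)) j := mulVec_nonneg hA' (sub_nonneg.2 hdr) j
    simp only [Pi.sub_apply, Pi.add_apply, mulVec_sub] at hA_gap ⊢
    rcases (hdr j).eq_or_lt with h | h
    · linarith [hc₀' j]
    obtain ⟨hout, hcash⟩ := hΔout j (by linarith [hdL j])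
    have hgain : Δ j - (Aᵀ *ᵥ Δ) j ≤ d j - (Aᵀ *ᵥ d) j := by
      rcases min_le_iff.1 ((hd j).symm ▸ le_max_right _ _ : min _ _ ≤ d j) with h' | h'
      · rcases min_le_iff.1 h' with h'' | h''
        · linarith
        · linarith [hAd j, hscale j hout]
      · linarith [hscale j hout]
    linarith [hr₀c j]
  · obtain ⟨hout, -⟩ := hΔout j (by linarith [hdr j])
    have hAd₀ : 0 ≤ (Aᵀ *ᵥ d) j := mulVec_nonneg hA' hd₀ j
    rcases le_max_iff.1 ((hd j).le.trans (max_le_max le_rfl (min_le_right _ _))) with h | h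
    · rcases le_max_iff.1 h with h | h
      · linarith [mul_nonneg (by linarith : 0 ≤ α) (sub_nonneg.2 hout)]
      · linarith
    · exact h

theorem exists_admissible_of_isPrepayment (hα : 1 ≤ α) (hA : ∀ i j, 0 ≤ A i j) {T : ℕ}
    {pbar Δ : Fin n → ℝ} {c c' r : ℕ → Fin n → ℝ} (hc' : ∀ t < T, 0 ≤ c' t)
    (hcc' : ∀ t, c' (t + 1) = c (t + 1)) (hΔ : IsPrepayment α A pbar (c 0) (c' 0) Δ)
    (hr : AdmissibleVecSeq n T α A pbar c r) :
    ∃ r', AdmissibleVecSeq n T α A (pbar - α • Δ) c' r' ∧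
      objVecSeq n T (coeff T α) r - α * coeff T α 0 * ∑ j, Δ j
        ≤ objVecSeq n T (coeff T α) r' := by
  induction T generalizing pbar Δ c c' r with
  | zero => exact ⟨r, fun t ht => absurd ht t.not_lt_zero, by simp [objVecSeq, coeff]⟩
  | succ T ih =>
    obtain ⟨⟨hr₀, hr₀p, hr₀c⟩, hq⟩ := admissibleVecSeq_succ_iff.1 hr
    obtain ⟨d, hdr, hdL, hdΔ, hdc, hsave⟩ :=
      exists_payment_reduction hα hA hr₀ hr₀p hr₀c (hc' 0 T.succ_pos) hΔ
    obtain ⟨q', hq', hobj⟩ := ih (c := residualCash A c (r 0)) (c' := residualCash A c' (r 0 - d))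
      (residualCash_nonneg hc' hdc) (fun t => hcc' (t + 1))
      (hΔ.residual hα (hcc' 0) hdr hdL hdΔ hsave) hq
    have hliab : residualLiab α (pbar - α • Δ) (r 0 - d)
        = residualLiab α pbar (r 0) - α • (α • Δ - d) := by
      simp only [residualLiab]; module
    refine ⟨cons (r 0 - d) q',
      admissibleVecSeq_cons_iff.2 ⟨⟨sub_nonneg.2 hdr, hdL, hdc⟩, hliab ▸ hq'⟩, ?_⟩
    have hsum : ∑ j, d j ≤ α * ∑ j, Δ j := by
      rw [mul_sum]; exact sum_le_sum fun j _ => hdΔ j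
    rw [objVecSeq_succ T r, objVecSeq_succ T (cons _ q'), coeff_succ_zero]
    simp only [cons_zero, cons_succ, Pi.sub_apply, Pi.smul_apply, smul_eq_mul, sum_sub_distrib,
      ← mul_sum] at hobj ⊢
    linarith

theorem exists_clearing_ge (hA : ∀ i j, 0 ≤ A i j) {pbar c₀ x₀ : Fin n → ℝ}
    (hx₀p : x₀ ≤ pbar) (hx₀c : x₀ ≤ c₀ + Aᵀ *ᵥ x₀) :
    ∃ x, x₀ ≤ x ∧ ∀ j, x j = min (pbar j) (c₀ j + (Aᵀ *ᵥ x) j) := by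
  have hmono : Monotone fun x => c₀ + Aᵀ *ᵥ x := fun _ _ h =>
    add_le_add_right (mulVec_mono (fun i j => hA j i) h) _
  obtain ⟨x, ⟨hx₀x, -⟩, hx⟩ := exists_eq_max_min hx₀p hmono
  exact ⟨x, hx₀x, fun j => (hx j).trans
    (max_eq_right ((le_min (hx₀p j) (hx₀c j)).trans (min_le_min le_rfl (hmono hx₀x j))))⟩

theorem isPrepayment_clearing_sub (hα : 0 < α) {pbar x₀ x : Fin n → ℝ} {c : ℕ → Fin n → ℝ}
    (hx₀c : x₀ ≤ c 0 + Aᵀ *ᵥ x₀) (hx₀x : x₀ ≤ x)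
    (hx : ∀ j, x j = min (pbar j) (c 0 j + (Aᵀ *ᵥ x) j)) :
    IsPrepayment α A (residualLiab α pbar x₀) (residualCash A c x₀ 0) (residualCash A c x 0)
      (x - x₀) := by
  refine ⟨sub_nonneg.2 hx₀x, fun j => ?_, fun j hj => ?_⟩
  · exact mul_le_mul_of_nonneg_left (sub_le_sub_right ((hx j).trans_le (min_le_left _ _)) _) hα.le
  · simp only [residualLiab, residualCash, cons_zero, Pi.smul_apply, Pi.sub_apply, Pi.add_apply,
      smul_eq_mul, mulVec_sub] at hj ⊢
    have hxp : x j < pbar j := by linarith [lt_of_mul_lt_mul_left hj hα.le]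
    have hxc : x j = c 0 j + (Aᵀ *ᵥ x) j :=
      (hx j).trans (min_eq_right (not_lt.1 fun h => hxp.ne ((hx j).trans (min_eq_left h.le))))
    have := hx₀c j
    simp only [Pi.add_apply] at this
    constructor <;> linarith

theorem IsOptimal.head_eq_min (hα : 1 ≤ α) (hA : ∀ i j, 0 ≤ A i j) {T : ℕ} {pbar : Fin n → ℝ}
    {c p : ℕ → Fin n → ℝ} (hc : ∀ t < T + 1, 0 ≤ c t) (hp : IsOptimal α A (T + 1) pbar c p) :
    ∀ i, p 0 i = min (pbar i) (c 0 i + (Aᵀ *ᵥ p 0) i) := by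
  obtain ⟨⟨hp₀, hp₀p, hp₀c⟩, htail⟩ := admissibleVecSeq_succ_iff.1 hp.1
  obtain ⟨x, hpx, hx⟩ := exists_clearing_ge hA hp₀p hp₀c
  by_contra! ⟨i, hi⟩
  have hlt : p 0 i < x i := by
    refine (lt_of_le_of_ne (le_min (hp₀p i) (hp₀c i)) hi).trans_le ?_
    rw [hx i]
    exact min_le_min le_rfl (add_le_add_right (mulVec_mono (fun i j => hA j i) hpx i) _)
  have hxc : x ≤ c 0 + Aᵀ *ᵥ x := fun j => (hx j).trans_le (min_le_right _ _)
  obtain ⟨r', hr', hobj⟩ := exists_admissible_of_isPrepayment hα hA (c := residualCash A c (p 0))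
    (residualCash_nonneg hc hxc) (fun _ => rfl)
    (isPrepayment_clearing_sub (x₀ := p 0) (by linarith) hp₀c hpx hx) htail
  have hliab : residualLiab α pbar (p 0) - α • (x - p 0) = residualLiab α pbar x := by
    simp only [residualLiab]; module
  have hbetter := hp.2 _ (admissibleVecSeq_cons_iff.2
    ⟨⟨hp₀.trans hpx, fun j => (hx j).trans_le (min_le_left _ _), hxc⟩, hliab ▸ hr'⟩)
  have hgain : ∑ j, p 0 j < ∑ j, x j := sum_lt_sum (fun j _ => hpx j) ⟨i, mem_univ _, hlt⟩
  rw [objVecSeq_succ T p, objVecSeq_succ T (cons x r'), coeff_succ_zero] at hbetter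
  simp only [cons_zero, cons_succ, Pi.sub_apply, sum_sub_distrib] at hobj hbetter
  linarith

theorem nominalVec_residual (pbar : Fin n → ℝ) (p : ℕ → Fin n → ℝ) (t : ℕ) (i : Fin n) :
    nominalVec α (residualLiab α pbar (p 0)) (fun t => p (t + 1)) t i
      = nominalVec α pbar p (t + 1) i := by
  simp only [nominalVec, residualLiab, sum_range_succ' _ t, Nat.add_sub_add_right, Pi.smul_apply,
    Pi.sub_apply, smul_eq_mul, Nat.sub_zero, pow_succ]
  ring

theorem worthVec_residual (c p : ℕ → Fin n → ℝ) (t : ℕ) (i : Fin n) :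
    residualCash A c (p 0) t i + worthVec A (residualCash A c (p 0)) (fun t => p (t + 1)) t i
      = c (t + 1) i + worthVec A c p (t + 1) i := by
  have h := sum_cash_cons (A := A) c (p 0) (fun t => p (t + 1)) t i
  rw [cons_head_tail] at h
  simp only [worthVec, sum_range_succ] at h ⊢
  linarith

theorem IsOptimal.eq_min (hα : 1 ≤ α) (hA : ∀ i j, 0 ≤ A i j) {T : ℕ} {pbar : Fin n → ℝ}
    {c p : ℕ → Fin n → ℝ} (hc : ∀ t < T, 0 ≤ c t) (hp : IsOptimal α A T pbar c p) :
    ∀ t < T, ∀ i,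
      p t i = min (nominalVec α pbar p t i) (c t i + worthVec A c p t i + (Aᵀ *ᵥ p t) i) := by
  induction T generalizing pbar c p with
  | zero => exact fun t ht => absurd ht t.not_lt_zero
  | succ T ih =>
    rintro (_ | t) ht i
    · simpa [nominalVec, worthVec] using hp.head_eq_min hα hA hc i
    · have hp₀c := (admissibleVecSeq_succ_iff.1 hp.1).1.2.2
      have := ih (residualCash_nonneg hc hp₀c) hp.tail t (by omega) i
      rwa [nominalVec_residual, worthVec_residual] at this

end Prorata

theorem prorata_dynamic_fixed_point_general (n T : ℕ)
    (α : ℝ) (hα : 1 ≤ α)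
    (A : Matrix (Fin n) (Fin n) ℝ) (hA0 : ∀ i j, 0 ≤ A i j)
    (pbar : Fin n → ℝ)
    (c : ℕ → Fin n → ℝ) (hc : ∀ t < T, ∀ i, 0 ≤ c t i)
    (pstar : ℕ → Fin n → ℝ)
    (hadm : AdmissibleVecSeq n T α A pbar c pstar)
    (hopt : ∀ q, AdmissibleVecSeq n T α A pbar c q →
      objVecSeq n T (coeff T α) q ≤ objVecSeq n T (coeff T α) pstar) :
    ∀ t < T,
      (∀ i, 0 ≤ pstar t i) ∧
      (∀ i, pstar t i =
        min (nominalVec α pbar pstar t i)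
          (c t i + worthVec A c pstar t i + Aᵀ.mulVec (pstar t) i)) :=
  fun t ht => ⟨(hadm t ht).1, Prorata.IsOptimal.eq_min hα hA0 hc ⟨hadm, hopt⟩ t ht⟩

/-- In the pro-rata dynamic model, the optimal sequence `[p*]` satisfies, at every period
`t < T`, `p*(t) ≥ 0` and the absolute priority fixed-point equation
`p*(t) = min(p̄*(t), c(t) + w*(t) + Aᵀp*(t))` componentwise. -/
theorem prorata_dynamic_fixed_point (n T : ℕ) (hn : 1 ≤ n) (hT : 1 ≤ T)
    (α : ℝ) (hα : 1 ≤ α)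
    (A : Matrix (Fin n) (Fin n) ℝ) (hA0 : ∀ i j, 0 ≤ A i j) (hA1 : ∀ i, ∑ j, A i j = 1)
    (pbar : Fin n → ℝ) (hpbar : ∀ i, 0 ≤ pbar i)
    (c : ℕ → Fin n → ℝ) (hc : ∀ t < T, ∀ i, 0 ≤ c t i)
    (pstar : ℕ → Fin n → ℝ)
    (hadm : AdmissibleVecSeq n T α A pbar c pstar)
    (hopt : ∀ q, AdmissibleVecSeq n T α A pbar c q →
      objVecSeq n T (coeff T α) q ≤ objVecSeq n T (coeff T α) pstar) :
    ∀ t < T,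
      (∀ i, 0 ≤ pstar t i) ∧
      (∀ i, pstar t i =
        min (nominalVec α pbar pstar t i)
          (c t i + worthVec A c pstar t i + Aᵀ.mulVec (pstar t) i)) :=
  prorata_dynamic_fixed_point_general n T α hα A hA0 pbar c hc pstar hadm hopt
end

section
/- Let A ∈ ℝ^{n×n} be a row-stochastic matrix with node set V = {1,…,n} and let V' ⊊ V be a proper nonempty subset. Then the principal submatrix A' = (a_ij)_{i,j∈V'} is NOT Schur stable (i.e., its spectral radius is at least 1) if and only if V' contains all nodes of some strongly connected sink component of the digraph G[A]. -/
open Matrix Finset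

/-- A real square matrix is Schur stable if all of its complex eigenvalues have
modulus strictly less than one (equivalently, its spectral radius is `< 1`). -/
def SchurStable {m : Type*} [Fintype m] [DecidableEq m] (M : Matrix m m ℝ) : Prop :=
  ∀ μ ∈ spectrum ℂ (M.map (algebraMap ℝ ℂ)), ‖μ‖ < 1

lemma pow_entry_nonneg {ι : Type*} [Fintype ι] [DecidableEq ι] {M : Matrix ι ι ℝ}
    (hM0 : ∀ i j, 0 ≤ M i j) : ∀ k i j, 0 ≤ (M ^ k) i j := by
  intro k
  induction k with
  | zero => intro i j; simp [Matrix.one_apply]; split <;> norm_num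
  | succ t ih =>
    intro i j
    rw [pow_succ, Matrix.mul_apply]
    exact Finset.sum_nonneg fun l _ => mul_nonneg (ih i l) (hM0 l j)

lemma schur_of_pow_rowsum_lt {ι : Type*} [Fintype ι] [DecidableEq ι] [Nonempty ι]
    (M : Matrix ι ι ℝ) (hM0 : ∀ i j, 0 ≤ M i j)
    (k : ℕ) (hk : ∀ i, ∑ j, (M ^ k) i j < 1) : SchurStable M := by
  intro μ hμ
  rw [spectrum.mem_iff, Matrix.isUnit_iff_isUnit_det, isUnit_iff_ne_zero, not_not] at hμ
  obtain ⟨v, hv0, hv⟩ := Matrix.exists_mulVec_eq_zero_iff.2 hμ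
  set M' : Matrix ι ι ℂ := M.map (algebraMap ℝ ℂ) with hM'
  have heig : M'.mulVec v = μ • v := by
    have : (algebraMap ℂ (Matrix ι ι ℂ) μ).mulVec v - M'.mulVec v = 0 := by
      rw [← Matrix.sub_mulVec]; exact hv
    have h2 : (algebraMap ℂ (Matrix ι ι ℂ) μ).mulVec v = μ • v := by
      rw [Algebra.algebraMap_eq_smul_one, Matrix.smul_mulVec, Matrix.one_mulVec]
    rw [h2] at this
    linear_combination (norm := module) -this
  have hpow : ∀ t, (M' ^ t).mulVec v = μ ^ t • v := by
    intro t
    induction t with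
    | zero => simp
    | succ t ih =>
      rw [pow_succ, ← Matrix.mulVec_mulVec, heig, Matrix.mulVec_smul, ih, smul_smul,
        ← pow_succ']
  have hmap : M' ^ k = (M ^ k).map (algebraMap ℝ ℂ) := by
    rw [hM', ← RingHom.mapMatrix_apply, ← map_pow, RingHom.mapMatrix_apply]
  obtain ⟨i, _, hi⟩ := Finset.exists_max_image Finset.univ (fun i => ‖v i‖) univ_nonempty
  have hvi : 0 < ‖v i‖ := by
    rcases Function.ne_iff.1 hv0 with ⟨j, hj⟩
    exact lt_of_lt_of_le (norm_pos_iff.2 hj) (hi j (mem_univ j))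
  have hkey : ‖μ‖ ^ k * ‖v i‖ < ‖v i‖ := by
    have h1 : ‖μ‖ ^ k * ‖v i‖ = ‖((M' ^ k).mulVec v) i‖ := by
      rw [hpow k]; simp [norm_smul]
    rw [h1, Matrix.mulVec, dotProduct]
    calc ‖∑ j, (M' ^ k) i j * v j‖ ≤ ∑ j, ‖(M' ^ k) i j * v j‖ := norm_sum_le _ _
      _ ≤ ∑ j, (M ^ k) i j * ‖v i‖ := by
          apply Finset.sum_le_sum
          intro j _
          rw [norm_mul, hmap]
          have : ‖((M ^ k).map (algebraMap ℝ ℂ)) i j‖ = (M ^ k) i j := by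
            simp [Matrix.map_apply, Complex.norm_real,
              abs_of_nonneg (pow_entry_nonneg hM0 k i j)]
          rw [this]
          exact mul_le_mul_of_nonneg_left (hi j (mem_univ j)) (pow_entry_nonneg hM0 k i j)
      _ = (∑ j, (M ^ k) i j) * ‖v i‖ := by rw [Finset.sum_mul]
      _ < 1 * ‖v i‖ := by exact mul_lt_mul_of_pos_right (hk i) hvi
      _ = ‖v i‖ := one_mul _
  have : ‖μ‖ ^ k < 1 := by
    by_contra h
    push_neg at h
    nlinarith
  by_contra h
  push_neg at h
  exact absurd this (not_lt.2 (one_le_pow₀ h))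

lemma rowsum_decay {ι : Type*} [Fintype ι] [DecidableEq ι] [Nonempty ι]
    (M : Matrix ι ι ℝ) (hM0 : ∀ i j, 0 ≤ M i j) (hM1 : ∀ i, ∑ j, M i j ≤ 1)
    (hreach : ∀ i, ∃ j, Relation.ReflTransGen (fun a b => 0 < M a b) i j ∧ ∑ l, M j l < 1) :
    ∃ k, ∀ i, ∑ j, (M ^ k) i j < 1 := by
  classical
  set s : ℕ → ι → ℝ := fun t i => ∑ j, (M ^ t) i j with hs
  have hrec : ∀ t i, s (t + 1) i = ∑ l, M i l * s t l := by
    intro t i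
    simp only [hs]
    rw [pow_succ']
    simp only [Matrix.mul_apply]
    rw [Finset.sum_comm]
    simp [Finset.mul_sum]
  have hle : ∀ t i, s t i ≤ 1 := by
    intro t
    induction t with
    | zero => intro i; simp [hs, Matrix.one_apply]
    | succ t ih =>
      intro i
      rw [hrec]
      calc ∑ l, M i l * s t l ≤ ∑ l, M i l * 1 := by
            apply Finset.sum_le_sum
            intro l _
            exact mul_le_mul_of_nonneg_left (ih l) (hM0 i l)
        _ ≤ 1 := by simpa using hM1 i
  have hnn : ∀ t i, 0 ≤ s t i := by
    intro t i
    exact Finset.sum_nonneg fun j _ => by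
      have := pow_entry_nonneg hM0 t i j
      exact this
  have hmono : ∀ t i, s (t + 1) i ≤ s t i := by
    intro t
    induction t with
    | zero =>
      intro i
      have : s 1 i = ∑ j, M i j := by simp [hs]
      rw [this]
      simpa [hs, Matrix.one_apply] using hM1 i
    | succ t ih =>
      intro i
      rw [hrec, hrec]
      apply Finset.sum_le_sum
      intro l _
      exact mul_le_mul_of_nonneg_left (ih l) (hM0 i l)
  have hanti : ∀ i, Antitone (fun t => s t i) :=
    fun i => antitone_nat_of_succ_le (fun t => hmono t i)
  have hstep : ∀ i j t, 0 < M i j → s t j < 1 → s (t + 1) i < 1 := by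
    intro i j t hij hj
    rw [hrec]
    calc ∑ l, M i l * s t l < ∑ l, M i l * 1 := by
          apply Finset.sum_lt_sum
          · intro l _; exact mul_le_mul_of_nonneg_left (hle t l) (hM0 i l)
          · exact ⟨j, mem_univ j, by nlinarith⟩
      _ ≤ 1 := by simpa using hM1 i
  have hex : ∀ i, ∃ t, s t i < 1 := by
    intro i
    obtain ⟨j, hreachj, hleaky⟩ := hreach i
    have hj1 : s 1 j < 1 := by simpa [hs] using hleaky
    induction hreachj using Relation.ReflTransGen.head_induction_on with
    | refl => exact ⟨1, hj1⟩
    | head hab _ ih =>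
      obtain ⟨t, ht⟩ := ih
      exact ⟨t + 1, hstep _ _ t hab ht⟩
  choose f hf using hex
  refine ⟨Finset.univ.sup f, fun i => ?_⟩
  have : s (Finset.univ.sup f) i ≤ s (f i) i := hanti i (Finset.le_sup (mem_univ i))
  exact lt_of_le_of_lt this (hf i)

lemma reach_mem_of_sink {n : ℕ} {A : Matrix (Fin n) (Fin n) ℝ} {S : Finset (Fin n)}
    (hsink : ∀ i ∈ S, ∀ j, 0 < A i j → j ∈ S) {a b : Fin n} (ha : a ∈ S)
    (hab : Reach A a b) : b ∈ S := by
  induction hab with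
  | refl => exact ha
  | tail _ hbc ih => exact hsink _ ih _ hbc

lemma sink_contains_sink_scc {n : ℕ} (A : Matrix (Fin n) (Fin n) ℝ) (S : Finset (Fin n))
    (hS : S.Nonempty) (hsink : ∀ i ∈ S, ∀ j, 0 < A i j → j ∈ S) :
    ∃ V0 : Set (Fin n), IsSCC A V0 ∧ IsSink A V0 ∧ ∀ i ∈ V0, i ∈ S := by
  classical
  set Rch : Fin n → Finset (Fin n) := fun v => Finset.univ.filter (fun j => Reach A v j)
    with hR
  obtain ⟨v, hvS, hvmin⟩ := S.exists_min_image (fun v => (Rch v).card) hS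
  have hmemR : ∀ {a b}, b ∈ Rch a ↔ Reach A a b := by
    intro a b; simp [hR]
  have hback : ∀ j, Reach A v j → Reach A j v := by
    intro j hvj
    have hjS : j ∈ S := reach_mem_of_sink hsink hvS hvj
    have hsub : Rch j ⊆ Rch v := by
      intro x hx
      exact hmemR.2 (hvj.trans (hmemR.1 hx))
    have hcard : (Rch v).card ≤ (Rch j).card := hvmin j hjS
    have heq : Rch j = Rch v := Finset.eq_of_subset_of_card_le hsub hcard
    have : v ∈ Rch j := heq ▸ hmemR.2 Relation.ReflTransGen.refl
    exact hmemR.1 this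
  refine ⟨{j | Reach A v j}, ⟨⟨v, Relation.ReflTransGen.refl⟩, ?_, ?_⟩, ?_, ?_⟩
  · intro i hi j hj
    exact (hback i hi).trans hj
  · intro i hi j hij _
    exact hi.trans hij
  · intro i hi j hij
    exact hi.trans (Relation.ReflTransGen.single hij)
  · intro i hi
    exact reach_mem_of_sink hsink hvS hi

lemma not_schur_of_sink {n : ℕ} (A : Matrix (Fin n) (Fin n) ℝ)
    (hA0 : ∀ i j, 0 ≤ A i j) (hA1 : ∀ i, ∑ j, A i j = 1)
    (V' : Finset (Fin n)) (V0 : Set (Fin n)) (hV0ne : V0.Nonempty)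
    (hsink : IsSink A V0) (hsub : ∀ i ∈ V0, i ∈ V') :
    ¬ SchurStable (A.submatrix (fun i : V' => (i : Fin n)) (fun j : V' => (j : Fin n))) := by
  classical
  haveI : Fintype ↥V0 := (Set.toFinite V0).fintype
  set W : Finset (Fin n) := V0.toFinset with hW
  have hmemW : ∀ {j}, j ∈ W ↔ j ∈ V0 := fun {j} => Set.mem_toFinset
  have hWne : W.Nonempty := ⟨hV0ne.choose, hmemW.2 hV0ne.choose_spec⟩
  haveI : Nonempty ↥W := ⟨⟨hWne.choose, hWne.choose_spec⟩⟩
  have hWV' : W ⊆ V' := fun j hj => hsub j (hmemW.1 hj)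
  set A' := A.submatrix (fun i : V' => (i : Fin n)) (fun j : V' => (j : Fin n)) with hA'
  set B := A.submatrix (fun i : W => (i : Fin n)) (fun j : W => (j : Fin n)) with hB
  have hzero : ∀ i ∈ V0, ∀ j, j ∉ V0 → A i j = 0 := fun i hi j hj =>
    le_antisymm (not_lt.1 fun h => hj (hsink i hi j h)) (hA0 i j)
  have hrow : ∀ i : ↥W, ∑ j : ↥W, A (i : Fin n) (j : Fin n) = 1 := by
    intro i
    rw [Finset.sum_coe_sort W (fun j => A (i : Fin n) j)]
    rw [Finset.sum_subset (Finset.subset_univ W)]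
    · exact hA1 i
    · intro j _ hj
      exact hzero i (hmemW.1 i.2) j (fun h => hj (hmemW.2 h))
  have hdetB : (B - 1).det = 0 := by
    apply Matrix.exists_mulVec_eq_zero_iff.1
    refine ⟨fun _ => 1, ?_, ?_⟩
    · intro h
      have := congrFun h (Classical.arbitrary ↥W)
      simp at this
    · funext i
      rw [Matrix.sub_mulVec, Matrix.one_mulVec]
      simp only [Matrix.mulVec, dotProduct, mul_one, Pi.sub_apply, Pi.zero_apply]
      rw [hB]
      simp only [Matrix.submatrix_apply]
      rw [hrow i]
      ring
  have hdetBT : (Bᵀ - 1).det = 0 := by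
    have : Bᵀ - 1 = (B - 1)ᵀ := by rw [Matrix.transpose_sub, Matrix.transpose_one]
    rw [this, Matrix.det_transpose]
    exact hdetB
  obtain ⟨y, hy0, hy⟩ := Matrix.exists_mulVec_eq_zero_iff.2 hdetBT
  have hyB : Bᵀ.mulVec y = y := by
    rw [Matrix.sub_mulVec, Matrix.one_mulVec, sub_eq_zero] at hy
    exact hy
  set x : ↥V' → ℝ := fun j => if h : (j : Fin n) ∈ W then y ⟨j, h⟩ else 0 with hx
  have hx0 : x ≠ 0 := by
    obtain ⟨j0, hj0⟩ := Function.ne_iff.1 hy0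
    intro h
    apply hj0
    have := congrFun h ⟨(j0 : Fin n), hWV' j0.2⟩
    simpa [hx, j0.2] using this
  have hdetA'T : (A'ᵀ - 1).det = 0 := by
    apply Matrix.exists_mulVec_eq_zero_iff.1
    refine ⟨x, hx0, ?_⟩
    rw [Matrix.sub_mulVec, Matrix.one_mulVec, sub_eq_zero]
    funext i
    set g : Fin n → ℝ := fun l => if h : l ∈ W then A l (i : Fin n) * y ⟨l, h⟩ else 0 with hg
    have step1 : ∀ j : ↥V', A'ᵀ i j * x j = g (j : Fin n) := by
      intro j
      rw [hA', hx, hg]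
      simp only [Matrix.transpose_apply, Matrix.submatrix_apply]
      by_cases h : (j : Fin n) ∈ W
      · rw [dif_pos h, dif_pos h]
      · rw [dif_neg h, dif_neg h, mul_zero]
    have hsum : A'ᵀ.mulVec x i = ∑ j : ↥W, A (j : Fin n) (i : Fin n) * y j := by
      calc A'ᵀ.mulVec x i = ∑ j : ↥V', A'ᵀ i j * x j := by
            simp [Matrix.mulVec, dotProduct]
        _ = ∑ j : ↥V', g (j : Fin n) := Finset.sum_congr rfl fun j _ => step1 j
        _ = ∑ j ∈ V', g j := Finset.sum_coe_sort V' g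
        _ = ∑ j ∈ W, g j :=
            (Finset.sum_subset hWV' (fun j _ hj => by rw [hg]; exact dif_neg hj)).symm
        _ = ∑ j : ↥W, g (j : Fin n) := (Finset.sum_coe_sort W g).symm
        _ = ∑ j : ↥W, A (j : Fin n) (i : Fin n) * y j := by
            refine Finset.sum_congr rfl fun j _ => ?_
            rw [hg]
            exact dif_pos j.2
    rw [hsum]
    by_cases h : (i : Fin n) ∈ W
    · have hB' : (Bᵀ.mulVec y) ⟨(i : Fin n), h⟩ = ∑ j : ↥W, A (j : Fin n) (i : Fin n) * y j := by
        simp [Matrix.mulVec, dotProduct, hB]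
      rw [← hB', hyB, hx]
      simp only
      rw [dif_pos h]
    · have : ∀ j : ↥W, A (j : Fin n) (i : Fin n) * y j = 0 := by
        intro j
        rw [hzero (j : Fin n) (hmemW.1 j.2) (i : Fin n) (fun hh => h (hmemW.2 hh)), zero_mul]
      rw [Finset.sum_congr rfl fun j _ => this j, Finset.sum_const_zero, hx]
      simp only
      rw [dif_neg h]
  have hdetA' : (A' - 1).det = 0 := by
    have h : A'ᵀ - 1 = (A' - 1)ᵀ := by rw [Matrix.transpose_sub, Matrix.transpose_one]
    rw [h, Matrix.det_transpose] at hdetA'T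
    exact hdetA'T
  intro hS
  have hmem : (1 : ℂ) ∈ spectrum ℂ (A'.map (algebraMap ℝ ℂ)) := by
    rw [spectrum.mem_iff, Matrix.isUnit_iff_isUnit_det]
    have h1 : algebraMap ℂ (Matrix ↥V' ↥V' ℂ) 1 = 1 := map_one _
    rw [h1]
    have h2 : (1 : Matrix ↥V' ↥V' ℂ) - A'.map (algebraMap ℝ ℂ) =
        -((A' - 1).map (algebraMap ℝ ℂ)) := by
      ext i j
      simp [Matrix.map_apply, Matrix.one_apply, Matrix.sub_apply]
      split <;> simp
    rw [h2, Matrix.det_neg, ← RingHom.mapMatrix_apply, ← RingHom.map_det, hdetA']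
    simp
  have := hS 1 hmem
  simp at this

/-- For a row-stochastic matrix `A` and a proper nonempty subset `V'` of the nodes, the
principal submatrix `A' = (a_ij)_{i,j ∈ V'}` is NOT Schur stable if and only if `V'`
contains all nodes of some strongly connected sink component of `G[A]`. -/
theorem submatrix_not_schur_iff_contains_sink (n : ℕ) (hn : 1 ≤ n)
    (A : Matrix (Fin n) (Fin n) ℝ) (hA0 : ∀ i j, 0 ≤ A i j) (hA1 : ∀ i, ∑ j, A i j = 1)
    (V' : Finset (Fin n)) (hne : V'.Nonempty) (hproper : V' ≠ Finset.univ) :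
    ¬ SchurStable (A.submatrix (fun i : V' => (i : Fin n)) (fun j : V' => (j : Fin n))) ↔
      ∃ V0 : Set (Fin n), IsSCC A V0 ∧ IsSink A V0 ∧ ∀ i ∈ V0, i ∈ V' := by
  classical
  constructor
  · intro hns
    by_contra hno
    apply hns
    haveI : Nonempty ↥V' := ⟨⟨hne.choose, hne.choose_spec⟩⟩
    set B := A.submatrix (fun i : V' => (i : Fin n)) (fun j : V' => (j : Fin n)) with hB
    have hB0 : ∀ i j : ↥V', 0 ≤ B i j := fun i j => hA0 _ _
    have hrowle : ∀ i : ↥V', ∑ j : ↥V', B i j ≤ 1 := by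
      intro i
      rw [hB]
      simp only [Matrix.submatrix_apply]
      rw [Finset.sum_coe_sort V' (fun j => A (i : Fin n) j)]
      calc ∑ j ∈ V', A (i : Fin n) j ≤ ∑ j, A (i : Fin n) j :=
            Finset.sum_le_sum_of_subset_of_nonneg (Finset.subset_univ _) (fun j _ _ => hA0 _ _)
        _ = 1 := hA1 i
    have hreach : ∀ i : ↥V', ∃ j : ↥V',
        Relation.ReflTransGen (fun a b => 0 < B a b) i j ∧ ∑ l, B j l < 1 := by
      by_contra hcon
      push_neg at hcon
      obtain ⟨i, hi⟩ := hcon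
      set R : Finset (Fin n) :=
        Finset.univ.filter (fun k => ∃ h : k ∈ V',
          Relation.ReflTransGen (fun a b : ↥V' => 0 < B a b) i ⟨k, h⟩) with hRdef
      have hmemR : ∀ {k}, k ∈ R ↔ ∃ h : k ∈ V',
          Relation.ReflTransGen (fun a b : ↥V' => 0 < B a b) i ⟨k, h⟩ := by
        intro k; simp [hRdef]
      have hiR : (i : Fin n) ∈ R := hmemR.2 ⟨i.2, Relation.ReflTransGen.refl⟩
      have hsinkR : ∀ k ∈ R, ∀ l, 0 < A k l → l ∈ R := by
        intro k hk l hl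
        obtain ⟨hkV, hreachk⟩ := hmemR.1 hk
        have h1le : (1 : ℝ) ≤ ∑ m : ↥V', B ⟨k, hkV⟩ m := hi ⟨k, hkV⟩ hreachk
        have h2 : ∑ m : ↥V', B ⟨k, hkV⟩ m = ∑ m ∈ V', A k m := by
          rw [hB]
          simp only [Matrix.submatrix_apply]
          exact Finset.sum_coe_sort V' (fun m => A k m)
        have hVsum : ∑ m ∈ V', A k m = 1 := by
          have h3 := hrowle ⟨k, hkV⟩
          rw [h2] at h1le h3
          linarith
        have hout : ∀ m ∉ V', A k m = 0 := by
          intro m hm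
          have hsd : ∑ m ∈ Finset.univ \ V', A k m = 0 := by
            have h4 := Finset.sum_sdiff (Finset.subset_univ V') (f := fun m => A k m)
            rw [hVsum, hA1 k] at h4
            linarith
          exact (Finset.sum_eq_zero_iff_of_nonneg (fun m _ => hA0 k m)).1 hsd m
            (Finset.mem_sdiff.2 ⟨Finset.mem_univ m, hm⟩)
        have hlV : l ∈ V' := by
          by_contra hlV
          rw [hout l hlV] at hl
          exact lt_irrefl 0 hl
        refine hmemR.2 ⟨hlV, hreachk.tail ?_⟩
        show 0 < B ⟨k, hkV⟩ ⟨l, hlV⟩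
        rw [hB]
        simpa using hl
      obtain ⟨V0, hSCC, hsinkV0, hsubR⟩ := sink_contains_sink_scc A R ⟨i, hiR⟩ hsinkR
      exact hno ⟨V0, hSCC, hsinkV0, fun a ha => (hmemR.1 (hsubR a ha)).1⟩
    obtain ⟨k, hk⟩ := rowsum_decay B hB0 hrowle hreach
    exact schur_of_pow_rowsum_lt B hB0 k hk
  · rintro ⟨V0, hSCC, hsink, hsub⟩
    exact not_schur_of_sink A hA0 hA1 V' V0 hSCC.1 hsink hsub
end

section
/- Let [P] = (P(0),…,P(T−1)) be any admissible sequence of payment matrices with associated nominal liabilities P̄(0) = P̄, P̄(t+1) = α(P̄(t) − P(t)). Then the cumulative system loss satisfies the identity ∑_{t=0}^{T−1} 𝟙ᵀ(P̄(t) − P(t))𝟙 = a_0·𝟙ᵀP̄𝟙 − ∑_{t=0}^{T−1} a_t·𝟙ᵀP(t)𝟙, where a_t = ∑_{j=0}^{T−t−1} α^j; consequently minimizing the cumulative loss over admissible sequences is equivalent to maximizing ∑_{t=0}^{T−1} a_t 𝟙ᵀP(t)𝟙. -/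
open Matrix Finset

lemma sum_nominal (n : ℕ) (α : ℝ) (Pbar : Matrix (Fin n) (Fin n) ℝ)
    (P : ℕ → Matrix (Fin n) (Fin n) ℝ) (t : ℕ) :
    ∑ i, ∑ j, nominalSeq α Pbar P t i j =
      α ^ t * (∑ i, ∑ j, Pbar i j) -
        ∑ k ∈ Finset.range t, α ^ (t - k) * ∑ i, ∑ j, P k i j := by
  induction t with
  | zero => simp [nominalSeq]
  | succ t ih =>
    have expand : ∑ i, ∑ j, nominalSeq α Pbar P (t + 1) i j =
        α * ((∑ i, ∑ j, nominalSeq α Pbar P t i j) - ∑ i, ∑ j, P t i j) := by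
      simp [nominalSeq, Matrix.smul_apply, Matrix.sub_apply, Finset.sum_sub_distrib,
        Finset.mul_sum, mul_sub]
    have hc : ∀ k ∈ Finset.range t,
        α ^ (t + 1 - k) * (∑ i, ∑ j, P k i j) = α * (α ^ (t - k) * ∑ i, ∑ j, P k i j) := by
      intro k hk
      rw [show t + 1 - k = (t - k) + 1 by simp at hk; omega, pow_succ]
      ring
    rw [expand, ih, Finset.sum_range_succ, Finset.sum_congr rfl hc, ← Finset.mul_sum,
      show t + 1 - t = 1 by omega, pow_succ, pow_one]
    ring

lemma key_identity (n T : ℕ) (α : ℝ) (Pbar : Matrix (Fin n) (Fin n) ℝ)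
    (P : ℕ → Matrix (Fin n) (Fin n) ℝ) :
    (∑ t ∈ Finset.range T, ∑ i, ∑ j, (nominalSeq α Pbar P t i j - P t i j)) =
      coeff T α 0 * (∑ i, ∑ j, Pbar i j) - objSeq n T (coeff T α) P := by
  have step1 : (∑ t ∈ Finset.range T, ∑ i, ∑ j, (nominalSeq α Pbar P t i j - P t i j)) =
      ∑ t ∈ Finset.range T, (α ^ t * (∑ i, ∑ j, Pbar i j) -
        ∑ k ∈ Finset.range (t + 1), α ^ (t - k) * ∑ i, ∑ j, P k i j) := by
    refine Finset.sum_congr rfl fun t _ => ?_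
    rw [Finset.sum_range_succ, show t - t = 0 by omega, pow_zero, one_mul]
    have : ∑ i, ∑ j, (nominalSeq α Pbar P t i j - P t i j) =
        (∑ i, ∑ j, nominalSeq α Pbar P t i j) - ∑ i, ∑ j, P t i j := by
      simp [Finset.sum_sub_distrib]
    rw [this, sum_nominal]
    ring
  have swap : ∑ t ∈ Finset.range T, ∑ k ∈ Finset.range (t + 1),
        α ^ (t - k) * ∑ i, ∑ j, P k i j =
      ∑ k ∈ Finset.range T, ∑ t ∈ Finset.Ico k T, α ^ (t - k) * ∑ i, ∑ j, P k i j := by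
    refine Finset.sum_comm' ?_
    intro x y
    simp only [Finset.mem_range, Finset.mem_Ico]
    omega
  have ico : ∀ k, ∑ t ∈ Finset.Ico k T, α ^ (t - k) * (∑ i, ∑ j, P k i j) =
      coeff T α k * ∑ i, ∑ j, P k i j := by
    intro k
    rw [Finset.sum_Ico_eq_sum_range, coeff, Finset.sum_mul]
    refine Finset.sum_congr rfl fun j _ => ?_
    congr 2
    omega
  rw [step1, Finset.sum_sub_distrib, swap, ← Finset.sum_mul]
  simp only [ico]
  rfl

/-- For any admissible sequence of payment matrices, the cumulative system loss
`∑_{t<T} 𝟙ᵀ(P̄(t) - P(t))𝟙` equals `a_0 𝟙ᵀP̄𝟙 - ∑_{t<T} a_t 𝟙ᵀP(t)𝟙`; consequently,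
minimizing the cumulative loss over admissible sequences is equivalent to maximizing
`∑_{t<T} a_t 𝟙ᵀP(t)𝟙`. -/
theorem loss_identity_and_equivalence (n T : ℕ) (hn : 1 ≤ n) (hT : 1 ≤ T)
    (α : ℝ) (hα : 1 ≤ α)
    (Pbar : Matrix (Fin n) (Fin n) ℝ) (hPbar : ∀ i j, 0 ≤ Pbar i j)
    (hdiag : ∀ i, Pbar i i = 0)
    (c : ℕ → Fin n → ℝ) (hc : ∀ t < T, ∀ i, 0 ≤ c t i)
    (P : ℕ → Matrix (Fin n) (Fin n) ℝ)
    (hadm : AdmissibleSeq n T α Pbar c P) :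
    (∑ t ∈ Finset.range T, ∑ i, ∑ j, (nominalSeq α Pbar P t i j - P t i j)) =
      coeff T α 0 * (∑ i, ∑ j, Pbar i j) - objSeq n T (coeff T α) P ∧
    (∀ Q : ℕ → Matrix (Fin n) (Fin n) ℝ, AdmissibleSeq n T α Pbar c Q →
      ((∑ t ∈ Finset.range T, ∑ i, ∑ j, (nominalSeq α Pbar P t i j - P t i j)) ≤
        (∑ t ∈ Finset.range T, ∑ i, ∑ j, (nominalSeq α Pbar Q t i j - Q t i j)) ↔
      objSeq n T (coeff T α) Q ≤ objSeq n T (coeff T α) P)) := by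
  refine ⟨key_identity n T α Pbar P, fun Q _ => ?_⟩
  rw [key_identity n T α Pbar P, key_identity n T α Pbar Q]
  constructor <;> intro h <;> linarith
end
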